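/- arXiv:math/9505204 — 12 statements merged into one kernel-verified Lean document; each statement's English description precedes it below -/
import Mathlib

section
/- If f : [0,1] → ℝ is continuous and not constant, then there is a subset H ⊆ [0,1] homeomorphic to the Cantor space 2^ω such that f is injective on H. -/
open Set

theorem stmt1 (f : C(unitInterval, ℝ)) (hf : ¬ ∀ x y : unitInterval, f x = f y) :
    ∃ H : Set unitInterval, Nonempty (H ≃ₜ (ℕ → Bool)) ∧ Set.InjOn f H := by
  push_neg at hf
  obtain ⟨a, b, hab⟩ := hf
  set S : Set unitInterval := {x | ∀ y, y < x → f y ≠ f x} with hSdef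
  -- f is injective on S
  have hinj : Set.InjOn f S := by
    intro x hx y hy hxy
    rcases lt_trichotomy x y with h | h | h
    · exact absurd hxy (hy x h)
    · exact h
    · exact absurd hxy.symm (hx y h)
  -- every value of f is attained on S
  have hmaps : ∀ z : unitInterval, ∃ x ∈ S, f x = f z := by
    intro z
    have hTc : IsClosed (f ⁻¹' {f z}) := isClosed_singleton.preimage f.continuous
    obtain ⟨m, hmT, hmin⟩ := hTc.isCompact.exists_isMinOn ⟨z, rfl⟩ continuous_id.continuousOn
    refine ⟨m, ?_, hmT⟩
    intro y hy hfy
    have : m ≤ y := hmin (show y ∈ f ⁻¹' {f z} by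
      simp only [mem_preimage, mem_singleton_iff] at hmT ⊢
      rw [hfy, hmT])
    exact absurd hy (not_lt.mpr this)
  -- range f contains an uncountable interval, so S is uncountable
  have hSunc : ¬ S.Countable := by
    intro hc
    have himg : Set.range f ⊆ f '' S := by
      rintro - ⟨z, rfl⟩
      obtain ⟨x, hx, hfx⟩ := hmaps z
      exact ⟨x, hx, hfx⟩
    have hIcc : Set.Icc (min (f a) (f b)) (max (f a) (f b)) ⊆ Set.range f := by
      have hconn : IsPreconnected (Set.range f) :=
        isPreconnected_range f.continuous
      have := hconn.ordConnected
      exact this.out (by rcases min_cases (f a) (f b) with ⟨h, _⟩ | ⟨h, _⟩ <;>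
          simp [h, Set.mem_range_self])
        (by rcases max_cases (f a) (f b) with ⟨h, _⟩ | ⟨h, _⟩ <;>
          simp [h, Set.mem_range_self])
    have hcnt : (Set.Icc (min (f a) (f b)) (max (f a) (f b))).Countable :=
      ((hc.image f).mono himg).mono hIcc
    have hlt : min (f a) (f b) < max (f a) (f b) := by
      rcases hab.lt_or_gt with h | h
      · simpa [min_def, max_def, h.le, h.not_ge] using h
      · simpa [min_def, max_def, h.le, h.not_ge] using h
    have := hcnt.le_aleph0
    rw [Cardinal.mk_Icc_real hlt] at this
    exact absurd this (by simp [not_le.mpr Cardinal.aleph0_lt_continuum])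
  -- S is Gδ in unitInterval
  have hSGδ : IsGδ S := by
    have hSeq : S = ⋂ n : ℕ,
        {x : unitInterval | ∃ y : unitInterval, (y : ℝ) + 1/(n+1) ≤ (x : ℝ) ∧ f y = f x}ᶜ := by
      ext x
      simp only [mem_iInter, mem_compl_iff, mem_setOf_eq, not_exists, not_and, hSdef]
      constructor
      · intro hx n y hy
        apply hx
        exact_mod_cast lt_of_lt_of_le (lt_add_of_pos_right (y:ℝ) (by positivity) : (y:ℝ) < y + 1/(n+1)) hy
      · intro hx y hy
        obtain ⟨n, hn⟩ := exists_nat_one_div_lt (show (0:ℝ) < (x:ℝ) - y by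
          simpa using (Subtype.coe_lt_coe.mpr hy))
        exact hx n y (by linarith)
    rw [hSeq]
    refine IsGδ.iInter_of_isOpen fun n => ?_
    rw [isOpen_compl_iff]
    have : {x : unitInterval | ∃ y : unitInterval, (y : ℝ) + 1/(n+1) ≤ (x : ℝ) ∧ f y = f x}
        = Prod.snd '' {p : unitInterval × unitInterval |
            (p.1 : ℝ) + 1/(n+1) ≤ (p.2 : ℝ) ∧ f p.1 = f p.2} := by
      ext x
      constructor
      · rintro ⟨y, h1, h2⟩; exact ⟨(y, x), ⟨h1, h2⟩, rfl⟩
      · rintro ⟨⟨y, x'⟩, ⟨h1, h2⟩, rfl⟩; exact ⟨y, h1, h2⟩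
    rw [this]
    have hK : IsClosed {p : unitInterval × unitInterval |
        (p.1 : ℝ) + 1/(n+1) ≤ (p.2 : ℝ) ∧ f p.1 = f p.2} := by
      apply IsClosed.inter
      · exact isClosed_le ((continuous_subtype_val.comp continuous_fst).add continuous_const)
          (continuous_subtype_val.comp continuous_snd)
      · exact isClosed_eq (f.continuous.comp continuous_fst) (f.continuous.comp continuous_snd)
    exact (hK.isCompact.image continuous_snd).isClosed
  -- use clopenability: a finer Polish topology on unitInterval in which S is closed
  haveI : PolishSpace unitInterval := inferInstance
  have hSm : MeasurableSet S := hSGδ.measurableSet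
  have key : ∃ g : (ℕ → Bool) → unitInterval, Set.range g ⊆ S ∧
      @Continuous _ _ Pi.topologicalSpace instTopologicalSpaceSubtype g ∧
      Function.Injective g := by
    obtain ⟨t', hle, hpol, hclosed, -⟩ := hSm.isClopenable
    obtain ⟨g, hgr, hgc, hgi⟩ :=
      @IsClosed.exists_nat_bool_injection_of_not_countable _ t' hpol S hclosed hSunc
    refine ⟨g, hgr, ?_, hgi⟩
    exact @Continuous.comp (ℕ → Bool) unitInterval unitInterval Pi.topologicalSpace t'
      instTopologicalSpaceSubtype g id (continuous_id_of_le hle) hgc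
  obtain ⟨g, hgr, hgc, hgi⟩ := key
  have hemb : Topology.IsClosedEmbedding g := hgc.isClosedEmbedding hgi
  refine ⟨Set.range g, ⟨(Topology.IsEmbedding.toHomeomorph hemb.toIsEmbedding).symm⟩, ?_⟩
  exact hinj.mono hgr
end

section
/- Let D = {z ∈ ℂ : |z| ≤ 1} be the closed unit disk and for θ ∈ [0,2π) let R_θ = {z ∈ D : z ≠ 0 and arg(z) = θ}. If f : D → ℝ is continuous and not constant, then the set of θ ∈ [0,2π) such that f is not constant on R_θ has cardinality 𝔠 = 2^{ℵ₀}. -/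
/-- The closed unit disk in `ℂ`. -/
noncomputable def Disk : Set ℂ := Metric.closedBall 0 1

/-- The ray `R_θ = {z ∈ D : z ≠ 0, arg z = θ}`, i.e. the nonzero points of the disk of the
form `r·e^{iθ}` with `r > 0`. -/
def Ray (θ : ℝ) : Set ℂ :=
  {z : ℂ | z ∈ Disk ∧ z ≠ 0 ∧ ∃ r : ℝ, 0 < r ∧ z = (r : ℂ) * Complex.exp (θ * Complex.I)}

open Filter Topology

lemma mem_ray_of (θ r : ℝ) (hr : 0 < r) (hr1 : r ≤ 1) :
    (r : ℂ) * Complex.exp (θ * Complex.I) ∈ Ray θ := by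
  refine ⟨?_, ?_, r, hr, rfl⟩
  · simp only [Disk, Metric.mem_closedBall, dist_zero_right]
    rw [norm_mul, Complex.norm_exp_ofReal_mul_I]
    simpa [abs_of_pos hr] using hr1
  · exact mul_ne_zero (by exact_mod_cast hr.ne') (Complex.exp_ne_zero _)

lemma ray_const_zero (f : ℂ → ℝ) (hf : ContinuousOn f Disk) (θ : ℝ)
    (h : ∀ z ∈ Ray θ, ∀ w ∈ Ray θ, f z = f w) :
    ∀ z ∈ Ray θ, f z = f 0 := by
  intro z hz
  set w : ℕ → ℂ := fun n => ((1 / (n + 1) : ℝ) : ℂ) * Complex.exp (θ * Complex.I) with hw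
  have hpos : ∀ n : ℕ, (0 : ℝ) < 1 / (n + 1) := fun n => by positivity
  have hle : ∀ n : ℕ, (1 / (n + 1) : ℝ) ≤ 1 := fun n => by
    rw [div_le_one (by positivity)]; linarith [Nat.cast_nonneg (α := ℝ) n]
  have hmem : ∀ n, w n ∈ Ray θ := fun n => mem_ray_of θ _ (hpos n) (hle n)
  have h1 : ∀ n, f (w n) = f z := fun n => h _ (hmem n) z hz
  have h2 : Tendsto w atTop (𝓝 (0 : ℂ)) := by
    have : Tendsto (fun n : ℕ => (1 / (n + 1) : ℝ)) atTop (𝓝 0) :=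
      tendsto_one_div_add_atTop_nhds_zero_nat
    have := ((Complex.continuous_ofReal.tendsto 0).comp this).mul_const
      (Complex.exp (θ * Complex.I))
    simpa [hw, one_div] using this
  have h3 : Tendsto w atTop (𝓝[Disk] (0 : ℂ)) := by
    rw [tendsto_nhdsWithin_iff]
    exact ⟨h2, Eventually.of_forall fun n => (hmem n).1⟩
  have h4 : Tendsto (fun n => f (w n)) atTop (𝓝 (f 0)) :=
    ((hf 0 (by simp [Disk])).tendsto).comp h3
  have h5 : Tendsto (fun n => f (w n)) atTop (𝓝 (f z)) := by
    simp only [h1]; exact tendsto_const_nhds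
  exact tendsto_nhds_unique h5 h4

theorem stmt3 (f : ℂ → ℝ) (hf : ContinuousOn f Disk)
    (hnc : ¬ ∀ z ∈ Disk, ∀ w ∈ Disk, f z = f w) :
    Cardinal.mk {θ : ℝ // θ ∈ Set.Ico 0 (2 * Real.pi) ∧
        ¬ ∀ z ∈ Ray θ, ∀ w ∈ Ray θ, f z = f w} = Cardinal.continuum := by
  refine le_antisymm ((Cardinal.mk_subtype_le _).trans_eq Cardinal.mk_real) ?_
  by_contra hcon
  have hcon' := not_le.mp hcon
  set Bad : Set ℝ := {θ : ℝ | θ ∈ Set.Ico 0 (2 * Real.pi) ∧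
      ¬ ∀ z ∈ Ray θ, ∀ w ∈ Ray θ, f z = f w} with hBad
  have hlt : Cardinal.mk Bad < Cardinal.continuum := hcon'
  have twopi : (0 : ℝ) < 2 * Real.pi := by positivity
  -- every point of the disk has value f 0
  have key : ∀ z ∈ Disk, f z = f 0 := by
    intro z hz
    rcases eq_or_ne z 0 with rfl | hz0
    · rfl
    -- normalized argument
    set a := Complex.arg z with ha
    have haIoc : a ∈ Set.Ioc (-Real.pi) Real.pi := Complex.arg_mem_Ioc z
    set φ : ℝ := if a < 0 then a + 2 * Real.pi else a with hφ
    have hφmem : φ ∈ Set.Ico 0 (2 * Real.pi) := by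
      rw [hφ]; split_ifs with h
      · constructor
        · nlinarith [haIoc.1, Real.pi_pos]
        · linarith
      · constructor
        · linarith [not_lt.mp h]
        · nlinarith [haIoc.2, Real.pi_pos]
    have hexpφ : Complex.exp (φ * Complex.I) = Complex.exp (a * Complex.I) := by
      rw [hφ]; split_ifs with h
      · have h2 : ((a + 2 * Real.pi : ℝ) : ℂ) * Complex.I
            = (a : ℂ) * Complex.I + 2 * (Real.pi : ℂ) * Complex.I := by push_cast; ring
        rw [h2, Complex.exp_add, Complex.exp_two_pi_mul_I, mul_one]
      · rfl
    have hzeq : ((‖z‖ : ℝ) : ℂ) * Complex.exp (φ * Complex.I) = z := by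
      rw [hexpφ]; exact Complex.norm_mul_exp_arg_mul_I z
    -- choose good angles near φ
    have hchoice : ∀ n : ℕ, ∃ θ : ℝ,
        θ ∈ Set.Ioo φ (min (φ + 1 / (n + 1)) (2 * Real.pi)) ∧ θ ∉ Bad := by
      intro n
      have hne : φ < min (φ + 1 / (n + 1)) (2 * Real.pi) :=
        lt_min (lt_add_of_pos_right φ (by positivity)) hφmem.2
      by_contra hcontra
      push_neg at hcontra
      have hsub : Set.Ioo φ (min (φ + 1 / (n + 1)) (2 * Real.pi)) ⊆ Bad := fun θ hθ =>
        hcontra θ hθ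
      have := (Cardinal.mk_Ioo_real hne).symm.trans_le (Cardinal.mk_le_mk_of_subset hsub)
      exact absurd this (not_le.mpr hlt)
    choose θs hθ1 hθ2 using hchoice
    have hgood : ∀ n, ∀ u ∈ Ray (θs n), ∀ v ∈ Ray (θs n), f u = f v := by
      intro n
      have hmem : θs n ∈ Set.Ico 0 (2 * Real.pi) := by
        constructor
        · linarith [(hθ1 n).1, hφmem.1]
        · exact lt_of_lt_of_le (hθ1 n).2 (min_le_right _ _)
      by_contra hc
      exact hθ2 n ⟨hmem, hc⟩
    -- the approximating points
    set w : ℕ → ℂ := fun n => ((‖z‖ : ℝ) : ℂ) * Complex.exp (θs n * Complex.I)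
      with hw
    have habs_pos : 0 < ‖z‖ := norm_pos_iff.mpr hz0
    have habs_le : ‖z‖ ≤ 1 := by
      simpa [Disk, Complex.dist_eq] using hz
    have hwray : ∀ n, w n ∈ Ray (θs n) := fun n => mem_ray_of _ _ habs_pos habs_le
    have hwval : ∀ n, f (w n) = f 0 := fun n =>
      ray_const_zero f hf (θs n) (hgood n) (w n) (hwray n)
    -- θs → φ
    have hθtend : Tendsto θs atTop (𝓝 φ) := by
      have hup : Tendsto (fun n : ℕ => φ + 1 / (n + 1)) atTop (𝓝 φ) := by
        have : Tendsto (fun n : ℕ => (1 / (n + 1) : ℝ)) atTop (𝓝 0) :=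
          tendsto_one_div_add_atTop_nhds_zero_nat
        simpa using (tendsto_const_nhds (x := φ)).add this
      refine tendsto_of_tendsto_of_tendsto_of_le_of_le (tendsto_const_nhds) hup
        (fun n => (hθ1 n).1.le) (fun n => ?_)
      exact le_trans (hθ1 n).2.le (min_le_left _ _)
    have hwtend : Tendsto w atTop (𝓝 z) := by
      have hc : Continuous fun θ : ℝ =>
          ((‖z‖ : ℝ) : ℂ) * Complex.exp (θ * Complex.I) :=
        continuous_const.mul (Complex.continuous_exp.comp
          ((Complex.continuous_ofReal).mul continuous_const))
      have := (hc.tendsto φ).comp hθtend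
      rwa [hzeq] at this
    have hwtend' : Tendsto w atTop (𝓝[Disk] z) := by
      rw [tendsto_nhdsWithin_iff]
      exact ⟨hwtend, Eventually.of_forall fun n => (hwray n).1⟩
    have h4 : Tendsto (fun n => f (w n)) atTop (𝓝 (f z)) :=
      ((hf z hz).tendsto).comp hwtend'
    have h5 : Tendsto (fun n => f (w n)) atTop (𝓝 (f 0)) := by
      simp only [hwval]; exact tendsto_const_nhds
    exact tendsto_nhds_unique h4 h5
  exact hnc fun z hz v hv => (key z hz).trans (key v hv).symm
end

section
/- Let X be a compact Hausdorff space. (i) If every continuous f : X → ℝ whose set Ω_f (the union of all open sets on which f is constant) is dense in X is in fact constant, then for every Hausdorff topological space M, every continuous f : X → M with Ω_f dense in X is constant. (ii) Conversely, if M is a Hausdorff space containing a subspace homeomorphic to [0,1], and every continuous f : X → M with Ω_f dense in X is constant, then every continuous f : X → ℝ with Ω_f dense in X is constant. -/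
/-- `OmegaSet f` is `Ω_f`: the union of all open sets on which `f` is constant. -/
def OmegaSet {X M : Type*} [TopologicalSpace X] (f : X → M) : Set X :=
  ⋃₀ {U : Set X | IsOpen U ∧ ∀ x ∈ U, ∀ y ∈ U, f x = f y}

lemma omega_sub {X M N : Type*} [TopologicalSpace X] {f : X → M} {F : X → N}
    (h : ∀ a b, f a = f b → F a = F b) : OmegaSet f ⊆ OmegaSet F := by
  rintro x ⟨U, ⟨hU, hc⟩, hx⟩
  exact ⟨U, ⟨hU, fun a ha b hb => h a b (hc a ha b hb)⟩, hx⟩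

theorem stmt6 {X : Type*} [TopologicalSpace X] [CompactSpace X] [T2Space X] :
    ((∀ f : C(X, ℝ), Dense (OmegaSet ⇑f) → ∀ x y : X, f x = f y) →
      ∀ (M : Type*) [TopologicalSpace M] [T2Space M],
        ∀ f : C(X, M), Dense (OmegaSet ⇑f) → ∀ x y : X, f x = f y) ∧
    (∀ (M : Type*) [TopologicalSpace M] [T2Space M] (S : Set M),
        Nonempty (unitInterval ≃ₜ S) →
        (∀ f : C(X, M), Dense (OmegaSet ⇑f) → ∀ x y : X, f x = f y) →
        ∀ f : C(X, ℝ), Dense (OmegaSet ⇑f) → ∀ x y : X, f x = f y) := by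
  constructor
  · intro h M _ _ f hf x y
    by_contra hne
    have hK : IsCompact (Set.range f) := isCompact_range f.continuous
    haveI : CompactSpace (Set.range f) := isCompact_iff_compactSpace.mp hK
    have hxy : (⟨f x, Set.mem_range_self x⟩ : Set.range f) ≠ ⟨f y, Set.mem_range_self y⟩ := by
      simpa [Subtype.ext_iff] using hne
    obtain ⟨g, hg0, hg1, -⟩ := exists_continuous_zero_one_of_isClosed
      (isClosed_singleton (x := (⟨f x, Set.mem_range_self x⟩ : Set.range f)))
      (isClosed_singleton (x := (⟨f y, Set.mem_range_self y⟩ : Set.range f)))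
      (Set.disjoint_singleton.mpr hxy)
    let F : C(X, ℝ) := g.comp ⟨Set.rangeFactorization f, f.continuous.subtype_mk _⟩
    have hd : Dense (OmegaSet ⇑F) := by
      refine hf.mono (omega_sub ?_)
      intro a b hab
      show g (Set.rangeFactorization f a) = g (Set.rangeFactorization f b)
      congr 1
      exact Subtype.ext hab
    have heq := h F hd x y
    have h0 : F x = 0 := hg0 rfl
    have h1 : F y = 1 := hg1 rfl
    rw [h0, h1] at heq
    exact zero_ne_one heq
  · intro M _ _ S ⟨e⟩ h f hf x y
    by_contra hne
    have hba : f y - f x ≠ 0 := sub_ne_zero.mpr (Ne.symm hne)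
    let ψ : ℝ → unitInterval := fun t =>
      Set.projIcc 0 1 zero_le_one ((t - f x) / (f y - f x))
    have hψ : Continuous ψ :=
      continuous_projIcc.comp (by fun_prop)
    let G : C(X, M) := ⟨fun z => (e (ψ (f z)) : M),
      continuous_subtype_val.comp (e.continuous.comp (hψ.comp f.continuous))⟩
    have hd : Dense (OmegaSet ⇑G) := by
      refine hf.mono (omega_sub ?_)
      intro a b hab
      show ((e (ψ (f a)) : M)) = ((e (ψ (f b)) : M))
      rw [hab]
    have heq := h G hd x y
    have hx0 : ψ (f x) = 0 := by
      apply Subtype.ext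
      simp [ψ, Set.coe_projIcc]
    have hy1 : ψ (f y) = 1 := by
      apply Subtype.ext
      simp [ψ, Set.coe_projIcc, div_self hba]
    have : e (ψ (f x)) = e (ψ (f y)) := Subtype.ext heq
    have := e.injective this
    rw [hx0, hy1] at this
    exact zero_ne_one (by exact_mod_cast congrArg Subtype.val this)
end

section
/- Let X be a compact Hausdorff space such that E_0(X,ℝ) = C(X,ℝ), and let Y be a regular closed subspace of X, i.e. Y = closure(U) for some open U ⊆ X, with the subspace topology. Then E_0(Y,ℝ) = C(Y,ℝ). -/
theorem stmt7 {X : Type*} [TopologicalSpace X] [CompactSpace X] [T2Space X]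
    (h : ∀ f : C(X, ℝ), Dense (OmegaSet ⇑f))
    (U : Set X) (hU : IsOpen U) :
    ∀ g : C(closure U, ℝ), Dense (OmegaSet ⇑g) := by
  intro g
  obtain ⟨f, hf⟩ := g.exists_restrict_eq (isClosed_closure (s := U))
  have hfg : ∀ z : closure U, g z = f z := fun z => by
    rw [← hf]; rfl
  rw [dense_iff_inter_open]
  rintro V hV ⟨⟨y, hyY⟩, hyV⟩
  obtain ⟨W, hW, rfl⟩ := isOpen_induced_iff.mp hV
  have hWU : (W ∩ U).Nonempty := mem_closure_iff.mp hyY W hW hyV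
  obtain ⟨x, ⟨hxW, hxU⟩, hxΩ⟩ :=
    dense_iff_inter_open.mp (h f) (W ∩ U) (hW.inter hU) hWU
  obtain ⟨O, ⟨hO, hOconst⟩, hxO⟩ := hxΩ
  have hxY : x ∈ closure U := subset_closure hxU
  refine ⟨⟨x, hxY⟩, hxW, ⟨Subtype.val ⁻¹' (O ∩ U),
    ⟨⟨(hO.inter hU).preimage continuous_subtype_val, ?_⟩, hxO, hxU⟩⟩⟩
  rintro ⟨a, ha⟩ ⟨haO, haU⟩ ⟨b, hb⟩ ⟨hbO, hbU⟩
  rw [hfg, hfg]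
  exact hOconst a haO b hbO
end

section
/- Let X be a compact Hausdorff space. If E_0(X,ℝ) = C(X,ℝ), then every nonempty open subset of X is either nonseparable (has no countable dense subset) or contains an isolated point of X. -/
theorem stmt8 {X : Type*} [TopologicalSpace X] [CompactSpace X] [T2Space X]
    (h : ∀ f : C(X, ℝ), Dense (OmegaSet ⇑f)) :
    ∀ V : Set X, IsOpen V → V.Nonempty →
      ¬ TopologicalSpace.SeparableSpace ↥V ∨ ∃ x ∈ V, IsOpen ({x} : Set X) := by
  intro V hV hVne
  by_contra hcon
  push_neg at hcon
  obtain ⟨hsep, hiso⟩ := hcon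
  haveI := hsep
  obtain ⟨D₀, hD₀c, hD₀d⟩ := TopologicalSpace.exists_countable_dense ↥V
  set D : Set X := Subtype.val '' D₀ with hD
  have hDV : D ⊆ V := by rintro x ⟨⟨y, hy⟩, _, rfl⟩; exact hy
  have hDc : D.Countable := hD₀c.image _
  have hDd : ∀ A : Set X, IsOpen A → A ⊆ V → A.Nonempty → (A ∩ D).Nonempty := by
    intro A hA hAV ⟨a, haA⟩
    have hA' : IsOpen (Subtype.val ⁻¹' A : Set ↥V) := hA.preimage continuous_subtype_val
    have hne : (Subtype.val ⁻¹' A : Set ↥V).Nonempty := ⟨⟨a, hAV haA⟩, haA⟩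
    obtain ⟨d, hdD₀, hdA⟩ := hD₀d.exists_mem_open hA' hne
    exact ⟨↑d, hdA, ⟨d, hdD₀, rfl⟩⟩
  haveI : Countable ↥D := hDc.to_subtype
  -- Build f injective on D via Baire category in C(X, ℝ)
  have key : ∃ f : C(X, ℝ), ∀ p : {p : ↥D × ↥D // (p.1 : X) ≠ (p.2 : X)},
      f p.1.1 ≠ f p.1.2 := by
    set g : {p : ↥D × ↥D // (p.1 : X) ≠ (p.2 : X)} → Set C(X, ℝ) :=
      fun p => {f : C(X, ℝ) | f p.1.1 ≠ f p.1.2} with hg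
    have hopen : ∀ p, IsOpen (g p) := by
      intro p
      have : g p = (fun f : C(X, ℝ) => f p.1.1 - f p.1.2) ⁻¹' ({0}ᶜ) := by
        ext f; simp [hg, sub_eq_zero]
      rw [this]
      exact (isOpen_compl_singleton).preimage
        ((continuous_eval_const _).sub (continuous_eval_const _))
    have hdense : ∀ p, Dense (g p) := by
      intro ⟨⟨a, b⟩, hab⟩
      rw [Metric.dense_iff]
      intro f ε hε
      obtain ⟨u, hu0, hu1, huI⟩ := exists_continuous_zero_one_of_isClosed
        (isClosed_singleton (x := (a : X))) (isClosed_singleton (x := (b : X)))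
        (by simpa [Set.disjoint_singleton] using hab)
      by_cases hfab : f a = f b
      · refine ⟨f + (ε / 2) • u, ?_, ?_⟩
        · rw [Metric.mem_ball, dist_eq_norm]
          have h1 : f + (ε / 2) • u - f = (ε / 2) • u := by ring
          rw [h1]
          have hu : ‖u‖ ≤ 1 := by
            rw [ContinuousMap.norm_le u zero_le_one]
            intro x
            rw [Real.norm_eq_abs, abs_le]
            exact ⟨by linarith [(huI x).1], (huI x).2⟩
          have hle := norm_smul_le (ε / 2) u
          have : ‖(ε / 2 : ℝ)‖ = ε / 2 := by
            rw [Real.norm_eq_abs, abs_of_pos]; positivity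
          rw [this] at hle
          nlinarith [norm_nonneg u]
        · simp only [hg, Set.mem_setOf_eq, ContinuousMap.add_apply, ContinuousMap.smul_apply]
          have ha : u a = 0 := hu0 rfl
          have hb : u b = 1 := hu1 rfl
          rw [ha, hb, hfab]
          simp only [smul_eq_mul, mul_zero, mul_one, add_zero]
          intro hcontra
          have : (ε / 2 : ℝ) = 0 := by linarith
          linarith
      · exact ⟨f, Metric.mem_ball_self hε, hfab⟩
    have := dense_iInter_of_isOpen hopen hdense
    obtain ⟨f, hf⟩ := this.nonempty
    exact ⟨f, fun p => Set.mem_iInter.mp hf p⟩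
  obtain ⟨f, hf⟩ := key
  have hinj : Set.InjOn f D := by
    intro a ha b hb hab
    by_contra hne
    exact hf ⟨(⟨a, ha⟩, ⟨b, hb⟩), hne⟩ hab
  -- Ω_f is dense, so it meets V
  obtain ⟨x, hxΩ, hxV⟩ : (OmegaSet ⇑f ∩ V).Nonempty := by
    obtain ⟨x, hx⟩ := (h f).exists_mem_open hV hVne
    exact ⟨x, hx.1, hx.2⟩
  obtain ⟨U, ⟨hUopen, hUconst⟩, hxU⟩ := hxΩ
  set W : Set X := U ∩ V with hW
  have hWopen : IsOpen W := hUopen.inter hV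
  have hxW : x ∈ W := ⟨hxU, hxV⟩
  -- W is not a singleton since x is not isolated
  have : ∃ y ∈ W, y ≠ x := by
    by_contra hcontra
    push_neg at hcontra
    have hWsing : W = {x} := Set.eq_singleton_iff_unique_mem.mpr ⟨hxW, hcontra⟩
    exact hiso x hxV (hWsing ▸ hWopen)
  obtain ⟨y, hyW, hyx⟩ := this
  obtain ⟨A, B, hAopen, hBopen, hxA, hyB, hABdisj⟩ := t2_separation hyx.symm
  have hA' : ((A ∩ W) ∩ D).Nonempty :=
    hDd _ (hAopen.inter hWopen) (fun z hz => hz.2.2) ⟨x, hxA, hxW⟩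
  have hB' : ((B ∩ W) ∩ D).Nonempty :=
    hDd _ (hBopen.inter hWopen) (fun z hz => hz.2.2) ⟨y, hyB, hyW⟩
  obtain ⟨d₁, ⟨hd₁A, hd₁W⟩, hd₁D⟩ := hA'
  obtain ⟨d₂, ⟨hd₂B, hd₂W⟩, hd₂D⟩ := hB'
  have hne : d₁ ≠ d₂ := fun heq => hABdisj.ne_of_mem hd₁A hd₂B heq
  exact hne (hinj hd₁D hd₂D (hUconst d₁ hd₁W.1 d₂ hd₂W.1))
end

section
/- Let X be a compact Hausdorff space in which every nonempty G_δ subset has nonempty interior. Then for every separable metric space M and every Borel measurable function f : X → M, the set Ω_f (the union of all open U ⊆ X on which f is constant) is dense in X. -/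
open MeasureTheory

/-- `f` is Borel measurable: preimages of open sets are Borel sets. -/
def BorelMeasurable {X M : Type*} [TopologicalSpace X] [TopologicalSpace M]
    (f : X → M) : Prop :=
  ∀ V : Set M, IsOpen V → MeasurableSet[borel X] (f ⁻¹' V)

open Topology Filter Set

/-- In a space where every nonempty Gδ has nonempty interior, residual sets have dense interior. -/
lemma dense_interior_of_residual {X : Type*} [TopologicalSpace X]
    (h : ∀ s : Set X, IsGδ s → s.Nonempty → (interior s).Nonempty)
    {s : Set X} (hGδ : IsGδ s) (hd : Dense s) : Dense (interior s) := by
  rw [dense_iff_inter_open]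
  intro U hU hUne
  obtain ⟨x, hx⟩ := hd.inter_open_nonempty U hU hUne
  have hGδ' : IsGδ (U ∩ s) := hU.isGδ.inter hGδ
  obtain ⟨y, hy⟩ := h _ hGδ' ⟨x, hx⟩
  exact ⟨y, interior_subset (interior_mono inter_subset_left hy), interior_mono inter_subset_right hy⟩

theorem stmt9 {X : Type*} [TopologicalSpace X] [CompactSpace X] [T2Space X]
    (h : ∀ s : Set X, IsGδ s → s.Nonempty → (interior s).Nonempty) :
    ∀ (M : Type*) [MetricSpace M] [TopologicalSpace.SeparableSpace M],
      ∀ f : X → M, BorelMeasurable f → Dense (OmegaSet f) := by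
  intro M _ _ f hf
  borelize X
  haveI := UniformSpace.secondCountable_of_separable M
  -- countable basis of M
  obtain ⟨B, hBc, -, hB⟩ := TopologicalSpace.exists_countable_basis M
  -- for each basis element b, an open set U b with f ⁻¹' b =ᵇ U b
  have key : ∀ b ∈ B, ∃ U : Set X, IsOpen U ∧ (f ⁻¹' b) =ᵇ U := by
    intro b hb
    exact (hf b (hB.isOpen hb)).residualEq_isOpen
  choose! U hUo hUeq using key
  -- the residual set where all the equivalences hold
  set R : Set X := ⋂ b ∈ B, {x | x ∈ f ⁻¹' b ↔ x ∈ U b} with hR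
  have hRres : R ∈ residual X := by
    rw [hR]
    rw [countable_bInter_mem hBc]
    intro b hb
    have := hUeq b hb
    rw [eventuallyEq_set] at this
    exact this
  obtain ⟨T, hTR, hTGδ, hTd⟩ := mem_residual.mp hRres
  set W : Set X := interior T with hW
  have hWo : IsOpen W := isOpen_interior
  have hWd : Dense W := dense_interior_of_residual h hTGδ hTd
  have hWR : W ⊆ R := interior_subset.trans hTR
  -- key equality: f ⁻¹' b ∩ W = U b ∩ W for b ∈ B
  have hWeq : ∀ b ∈ B, f ⁻¹' b ∩ W = U b ∩ W := by
    intro b hb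
    ext x
    simp only [mem_inter_iff, and_congr_left_iff]
    intro hxW
    have := hWR hxW
    rw [hR] at this
    simpa using (mem_iInter₂.mp this b hb)
  -- preimages of open sets intersected with W are open
  have hopen : ∀ V : Set M, IsOpen V → IsOpen (f ⁻¹' V ∩ W) := by
    intro V hV
    have : f ⁻¹' V ∩ W = ⋃ b ∈ {b ∈ B | b ⊆ V}, (U b ∩ W) := by
      ext x
      simp only [mem_inter_iff, mem_iUnion, mem_setOf_eq, mem_preimage]
      constructor
      · rintro ⟨hxV, hxW⟩
        obtain ⟨b, hbB, hxb, hbV⟩ := hB.isOpen_iff.mp hV (f x) hxV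
        have hx' : x ∈ U b ∩ W := (hWeq b hbB) ▸ (show x ∈ f ⁻¹' b ∩ W from ⟨hxb, hxW⟩)
        exact ⟨b, ⟨hbB, hbV⟩, hx'.1, hx'.2⟩
      · rintro ⟨b, ⟨hbB, hbV⟩, hx⟩
        have hx' : x ∈ f ⁻¹' b ∩ W := (hWeq b hbB).symm ▸ (show x ∈ U b ∩ W from ⟨hx.1, hx.2⟩)
        exact ⟨hbV hx'.1, hx'.2⟩
    rw [this]
    exact isOpen_biUnion fun b hb => (hUo b hb.1).inter hWo
  -- now show density
  rw [dense_iff_inter_open]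
  intro V hV hVne
  obtain ⟨x, hxV, hxW⟩ := hWd.inter_open_nonempty V hV hVne
  -- the Gδ set V ∩ W ∩ f ⁻¹' {f x}
  set G : Set X := V ∩ ⋂ n : ℕ, (f ⁻¹' (Metric.ball (f x) (1 / (n + 1))) ∩ W) with hG
  have hGδ : IsGδ G := by
    refine (hV.isGδ).inter (IsGδ.iInter fun n => ?_)
    exact (hopen _ Metric.isOpen_ball).isGδ
  have hxG : x ∈ G := by
    refine ⟨hxV, mem_iInter.mpr fun n => ⟨?_, hxW⟩⟩
    simp only [mem_preimage, Metric.mem_ball, dist_self]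
    positivity
  have hGconst : ∀ y ∈ G, f y = f x := by
    rintro y ⟨-, hy⟩
    rw [mem_iInter] at hy
    have : ∀ n : ℕ, dist (f y) (f x) < 1 / (n + 1) := fun n => (hy n).1
    by_contra hne
    have hd0 : 0 < dist (f y) (f x) := dist_pos.mpr hne
    obtain ⟨n, hn⟩ := exists_nat_one_div_lt hd0
    exact absurd (this n) (not_lt.mpr hn.le)
  obtain ⟨y, hy⟩ := h G hGδ ⟨x, hxG⟩
  refine ⟨y, ?_, ?_⟩
  · exact (interior_subset hy).1
  · exact ⟨interior G, ⟨isOpen_interior, fun a ha b hb => by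
      rw [hGconst a (interior_subset ha), hGconst b (interior_subset hb)]⟩, hy⟩
end

section
/- Let X be a compact Hausdorff space. Then the following condition (5): 'for every separable metric space M and every Borel measurable f : X → M, the set Ω_f is dense in X' holds if and only if both of the following hold: (4) 'for every separable metric space M and every Borel measurable f : X → M, the set Ω̂_f is dense in X', and (*) 'every meagre (first category) subset of X is nowhere dense'. -/
open MeasureTheory

/-- `OmegaHatSet f` is `Ω̂_f`: the union of all open sets `U` such that `f` is constant on
`U \ C` for some meagre set `C`. -/
def OmegaHatSet {X M : Type*} [TopologicalSpace X] (f : X → M) : Set X :=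
  ⋃₀ {U : Set X | IsOpen U ∧
      ∃ C : Set X, IsMeagre C ∧ ∀ x ∈ U \ C, ∀ y ∈ U \ C, f x = f y}

lemma my_omegaSet_comp {X M N : Type*} [TopologicalSpace X] (f : X → M) {g : M → N}
    (hg : Function.Injective g) : OmegaSet (g ∘ f) = OmegaSet f := by
  unfold OmegaSet
  have key : ∀ U : Set X, (∀ x ∈ U, ∀ y ∈ U, (g ∘ f) x = (g ∘ f) y) ↔
      (∀ x ∈ U, ∀ y ∈ U, f x = f y) := fun U =>
    ⟨fun h x hx y hy => hg (h x hx y hy), fun h x hx y hy => congrArg g (h x hx y hy)⟩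
  have hset : {U : Set X | IsOpen U ∧ ∀ x ∈ U, ∀ y ∈ U, (g ∘ f) x = (g ∘ f) y} =
      {U : Set X | IsOpen U ∧ ∀ x ∈ U, ∀ y ∈ U, f x = f y} := by
    ext U
    exact and_congr_right fun _ => key U
  rw [hset]

lemma my_omegaHatSet_comp {X M N : Type*} [TopologicalSpace X] (f : X → M) {g : M → N}
    (hg : Function.Injective g) : OmegaHatSet (g ∘ f) = OmegaHatSet f := by
  unfold OmegaHatSet
  have key : ∀ U C : Set X, (∀ x ∈ U \ C, ∀ y ∈ U \ C, (g ∘ f) x = (g ∘ f) y) ↔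
      (∀ x ∈ U \ C, ∀ y ∈ U \ C, f x = f y) := fun U C =>
    ⟨fun h x hx y hy => hg (h x hx y hy), fun h x hx y hy => congrArg g (h x hx y hy)⟩
  have hset : {U : Set X | IsOpen U ∧ ∃ C : Set X, IsMeagre C ∧
        ∀ x ∈ U \ C, ∀ y ∈ U \ C, (g ∘ f) x = (g ∘ f) y} =
      {U : Set X | IsOpen U ∧ ∃ C : Set X, IsMeagre C ∧
        ∀ x ∈ U \ C, ∀ y ∈ U \ C, f x = f y} := by
    ext U
    exact and_congr_right fun _ => exists_congr fun C =>
      and_congr_right fun _ => key U C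
  rw [hset]

lemma my_borel_comp {X M N : Type*} [TopologicalSpace X] [TopologicalSpace M]
    [TopologicalSpace N] {f : X → M} {g : M → N} (hf : BorelMeasurable f)
    (hg : Continuous g) : BorelMeasurable (g ∘ f) := by
  intro V hV
  rw [Set.preimage_comp]
  exact hf _ (hV.preimage hg)

/-- An injective continuous map from any separable metric space into a separable metric
space living in an arbitrary chosen universe. -/
lemma my_exists_embed.{u, v} (M : Type v) [MetricSpace M]
    [TopologicalSpace.SeparableSpace M] :
    ∃ (N : Type u) (_i : MetricSpace N) (_s : TopologicalSpace.SeparableSpace N)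
      (g : M → N), Function.Injective g ∧ Continuous g := by
  let k := kuratowskiEmbedding M
  have hk : Isometry k := kuratowskiEmbedding.isometry M
  let N0 := Set.range k
  let g0 : M → N0 := Set.rangeFactorization k
  have hg0c : Continuous g0 := hk.continuous.subtype_mk _
  have hg0i : Function.Injective g0 := fun a b h =>
    hk.injective (congrArg Subtype.val h)
  haveI : TopologicalSpace.SeparableSpace N0 :=
    (Set.rangeFactorization_surjective.denseRange).separableSpace hg0c
  haveI : TopologicalSpace.SeparableSpace (ULift.{u} N0) :=
    (ULift.up_surjective.denseRange).separableSpace continuous_uliftUp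
  exact ⟨ULift.{u} N0, inferInstance, inferInstance, ULift.up ∘ g0,
    ULift.up_injective.comp hg0i, continuous_uliftUp.comp hg0c⟩

lemma my_transfer_omega.{u, v} {X : Type*} [TopologicalSpace X]
    (h : ∀ (M : Type u) [MetricSpace M] [TopologicalSpace.SeparableSpace M],
        ∀ f : X → M, BorelMeasurable f → Dense (OmegaSet f))
    (M : Type v) [MetricSpace M] [TopologicalSpace.SeparableSpace M]
    (f : X → M) (hf : BorelMeasurable f) : Dense (OmegaSet f) := by
  obtain ⟨N, _i, _s, g, hgi, hgc⟩ := my_exists_embed.{u} M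
  have := h N (g ∘ f) (my_borel_comp hf hgc)
  rwa [my_omegaSet_comp f hgi] at this

lemma my_transfer_omegaHat.{u, v} {X : Type*} [TopologicalSpace X]
    (h : ∀ (M : Type u) [MetricSpace M] [TopologicalSpace.SeparableSpace M],
        ∀ f : X → M, BorelMeasurable f → Dense (OmegaHatSet f))
    (M : Type v) [MetricSpace M] [TopologicalSpace.SeparableSpace M]
    (f : X → M) (hf : BorelMeasurable f) : Dense (OmegaHatSet f) := by
  obtain ⟨N, _i, _s, g, hgi, hgc⟩ := my_exists_embed.{u} M
  have := h N (g ∘ f) (my_borel_comp hf hgc)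
  rwa [my_omegaHatSet_comp f hgi] at this

theorem stmt10 {X : Type*} [TopologicalSpace X] [CompactSpace X] [T2Space X] :
    (∀ (M : Type*) [MetricSpace M] [TopologicalSpace.SeparableSpace M],
        ∀ f : X → M, BorelMeasurable f → Dense (OmegaSet f)) ↔
      ((∀ (M : Type*) [MetricSpace M] [TopologicalSpace.SeparableSpace M],
          ∀ f : X → M, BorelMeasurable f → Dense (OmegaHatSet f)) ∧
        (∀ C : Set X, IsMeagre C → IsNowhereDense C)) := by
  constructor
  · intro h5
    constructor
    · intro M _ _ f hf
      refine (my_transfer_omega h5 M f hf).mono ?_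
      rintro x ⟨U, ⟨hU, hconst⟩, hxU⟩
      exact ⟨U, ⟨hU, ∅, IsMeagre.empty,
        fun a ha b hb => hconst a ha.1 b hb.1⟩, hxU⟩
    · intro C hC
      obtain ⟨S, hS_nd, hS_ct, hCS⟩ := isMeagre_iff_countable_union_isNowhereDense.mp hC
      classical
      set D : Set X := ⋃₀ (closure '' S) with hD_def
      have hD_meagre : IsMeagre D := by
        rw [isMeagre_iff_countable_union_isNowhereDense]
        refine ⟨closure '' S, ?_, hS_ct.image _, Set.Subset.rfl⟩
        rintro t ⟨s, hs, rfl⟩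
        exact (hS_nd s hs).closure
      have hCD : C ⊆ D := fun x hx => by
        obtain ⟨s, hs, hxs⟩ := hCS hx
        exact ⟨closure s, ⟨s, hs, rfl⟩, subset_closure hxs⟩
      have hD_meas : MeasurableSet[borel X] D := by
        refine MeasurableSet.sUnion (hS_ct.image _) fun t ht => ?_
        obtain ⟨s, hs, rfl⟩ := ht
        have : MeasurableSet[borel X] (closure s)ᶜ :=
          MeasurableSpace.measurableSet_generateFrom isClosed_closure.isOpen_compl
        simpa using this.compl
      set f : X → ℝ := D.indicator (fun _ => (1 : ℝ)) with hf_def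
      have hfx : ∀ x, x ∈ D → f x = 1 := fun x hx => Set.indicator_of_mem hx _
      have hfx' : ∀ x, x ∉ D → f x = 0 := fun x hx => Set.indicator_of_notMem hx _
      have hf_borel : BorelMeasurable f := by
        intro V hV
        by_cases h1 : (1 : ℝ) ∈ V <;> by_cases h0 : (0 : ℝ) ∈ V
        · have : f ⁻¹' V = Set.univ := by
            ext x; by_cases hx : x ∈ D <;>
              simp [Set.mem_preimage, hfx x, hfx' x, hx, h1, h0]
          rw [this]; exact @MeasurableSet.univ X (borel X)
        · have : f ⁻¹' V = D := by
            ext x; by_cases hx : x ∈ D <;>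
              simp [Set.mem_preimage, hfx x, hfx' x, hx, h1, h0]
          rw [this]; exact hD_meas
        · have : f ⁻¹' V = Dᶜ := by
            ext x; by_cases hx : x ∈ D <;>
              simp [Set.mem_preimage, hfx x, hfx' x, hx, h1, h0]
          rw [this]; exact hD_meas.compl
        · have : f ⁻¹' V = ∅ := by
            ext x; by_cases hx : x ∈ D <;>
              simp [Set.mem_preimage, hfx x, hfx' x, hx, h1, h0]
          rw [this]; exact @MeasurableSet.empty X (borel X)
      rw [IsNowhereDense]
      by_contra hne
      obtain ⟨y0, hy0⟩ := Set.nonempty_iff_ne_empty.mpr hne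
      have hdense : Dense (OmegaSet f) := my_transfer_omega h5 ℝ f hf_borel
      obtain ⟨y, hyU, hyΩ⟩ := dense_iff_inter_open.mp hdense
        (interior (closure C)) isOpen_interior ⟨y0, hy0⟩
      obtain ⟨W, ⟨hWopen, hWconst⟩, hyW⟩ := hyΩ
      set W' : Set X := W ∩ interior (closure C) with hW'_def
      have hW'open : IsOpen W' := hWopen.inter isOpen_interior
      have hyW' : y ∈ W' := ⟨hyW, hyU⟩
      have hyclD : y ∈ closure D := closure_mono hCD (interior_subset hyU)
      obtain ⟨z, hzW', hzD⟩ := mem_closure_iff.mp hyclD W' hW'open hyW'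
      have hW'D : W' ⊆ D := by
        intro w hw
        by_contra hwD
        have : f w = f z := hWconst w hw.1 z hzW'.1
        rw [hfx' w hwD, hfx z hzD] at this
        norm_num at this
      have hdc : Dense Dᶜ := dense_of_mem_residual hD_meagre
      obtain ⟨u, huW', huD⟩ := hdc.inter_open_nonempty W' hW'open ⟨y, hyW'⟩
      exact huD (hW'D huW')
  · rintro ⟨h4, hstar⟩ M _ _ f hf
    rw [dense_iff_inter_open]
    intro V hV hVne
    obtain ⟨y, hyV, hyΩ⟩ := dense_iff_inter_open.mp
      (my_transfer_omegaHat h4 M f hf) V hV hVne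
    obtain ⟨U, ⟨hUopen, C, hCmeagre, hconst⟩, hyU⟩ := hyΩ
    have hCnd : interior (closure C) = ∅ := hstar C hCmeagre
    set W : Set X := (V ∩ U) \ closure C with hW_def
    have hWopen : IsOpen W := (hV.inter hUopen).sdiff isClosed_closure
    have hWne : W.Nonempty := by
      by_contra hne
      have hsub : V ∩ U ⊆ closure C := by
        intro x hx
        by_contra hxc
        exact hne ⟨x, hx, hxc⟩
      have : y ∈ interior (closure C) :=
        interior_mono hsub (mem_interior_iff_mem_nhds.mpr
          ((hV.inter hUopen).mem_nhds ⟨hyV, hyU⟩))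
      rw [hCnd] at this
      exact this
    obtain ⟨z, hz⟩ := hWne
    refine ⟨z, hz.1.1, W, ⟨hWopen, ?_⟩, hz⟩
    intro a ha b hb
    exact hconst a ⟨ha.1.2, fun h => ha.2 (subset_closure h)⟩
      b ⟨hb.1.2, fun h => hb.2 (subset_closure h)⟩
end

section
/- Let X be a compact metrizable space. Then the following are equivalent: (i) the set of isolated points of X is dense in X; (ii) every nonempty open subset of X is either nonseparable or contains an isolated point; (iii) for every separable metric space M and every Borel measurable f : X → M, the set Ω_f is dense in X. -/
open MeasureTheory

theorem stmt11 {X : Type*} [TopologicalSpace X] [CompactSpace X]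
    [TopologicalSpace.MetrizableSpace X] :
    List.TFAE
      [ Dense {x : X | IsOpen ({x} : Set X)},
        ∀ V : Set X, IsOpen V → V.Nonempty →
          ¬ TopologicalSpace.SeparableSpace ↥V ∨ ∃ x ∈ V, IsOpen ({x} : Set X),
        ∀ (M : Type) [MetricSpace M] [TopologicalSpace.SeparableSpace M],
          ∀ f : X → M, BorelMeasurable f → Dense (OmegaSet f) ] := by
  letI : MetricSpace X := TopologicalSpace.metrizableSpaceMetric X
  haveI : SecondCountableTopology X := inferInstance
  tfae_have 1 → 2 := by
    intro h V hV hne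
    right
    obtain ⟨x, hx, hxV⟩ := h.exists_mem_open hV hne
    exact ⟨x, hxV, hx⟩
  tfae_have 2 → 1 := by
    intro h
    rw [dense_iff_inter_open]
    intro V hV hne
    rcases h V hV hne with h' | ⟨x, hx, hx'⟩
    · haveI : TopologicalSpace.SeparableSpace ↥V :=
        TopologicalSpace.SecondCountableTopology.to_separableSpace
      exact absurd this h'
    · exact ⟨x, hx, hx'⟩
  tfae_have 1 → 3 := by
    intro h M _ _ f _
    refine h.mono ?_
    intro x hx
    exact ⟨{x}, ⟨hx, by rintro a rfl b rfl; rfl⟩, rfl⟩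
  tfae_have 3 → 1 := by
    intro h
    set e := kuratowskiEmbedding X with he
    have hiso := kuratowskiEmbedding.isometry X
    set M := Set.range e
    haveI : TopologicalSpace.SeparableSpace M :=
      (TopologicalSpace.isSeparable_range hiso.continuous).separableSpace
    have hf : Continuous (Set.rangeFactorization e) :=
      hiso.continuous.subtype_mk _
    have hd := h M (Set.rangeFactorization e)
      (fun V hV => MeasurableSpace.measurableSet_generateFrom (hV.preimage hf))
    refine hd.mono ?_
    rintro x ⟨U, ⟨hUo, hUc⟩, hxU⟩
    have hinj := hiso.injective
    have : U = {x} := by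
      apply Set.eq_singleton_iff_unique_mem.mpr
      refine ⟨hxU, fun y hy => ?_⟩
      have := hUc y hy x hxU
      exact hinj (congrArg Subtype.val this)
    simpa [this] using hUo
  tfae_finish
end

section
/- Let X be a compact Hausdorff extremally disconnected space (the closure of every open subset of X is open). Then E_0(X,ℝ) = C(X,ℝ) if and only if for every separable metric space M and every Borel measurable f : X → M, the set Ω̂_f is dense in X. -/
open MeasureTheory

open Filter Topology Set

section Digits

/-- Summability of ternary digit expansions. -/
private lemma digits_summable {a : ℕ → ℝ} (ha : ∀ n, a n = 0 ∨ a n = 1) :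
    Summable (fun n => a n * (3 : ℝ)⁻¹ ^ (n + 1)) := by
  have hg : Summable (fun n : ℕ => (3 : ℝ)⁻¹ ^ (n + 1)) := by
    simpa [pow_succ] using
      (summable_geometric_of_lt_one (by norm_num) (by norm_num : (3 : ℝ)⁻¹ < 1)).mul_right
        (3 : ℝ)⁻¹
  refine Summable.of_nonneg_of_le (fun n => ?_) (fun n => ?_) hg
  · rcases ha n with h | h <;> simp [h] <;> positivity
  · rcases ha n with h | h <;> simp [h] <;> positivity

private lemma geom_tail_sum : ∑' n : ℕ, (3 : ℝ)⁻¹ ^ (n + 2) = 6⁻¹ := by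
  have h1 : ∀ n : ℕ, (3 : ℝ)⁻¹ ^ (n + 2) = (3 : ℝ)⁻¹ ^ n * 9⁻¹ := by
    intro n; rw [pow_add]; norm_num
  rw [tsum_congr h1, tsum_mul_right, tsum_geometric_of_lt_one (by norm_num) (by norm_num)]
  norm_num

private lemma tail_bound {c : ℕ → ℝ} (hc : ∀ n, |c n| ≤ 1) :
    |∑' n : ℕ, c n * (3 : ℝ)⁻¹ ^ (n + 2)| ≤ 6⁻¹ := by
  have hg : Summable (fun n : ℕ => (3 : ℝ)⁻¹ ^ (n + 2)) := by
    simpa [pow_succ, mul_assoc] using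
      (summable_geometric_of_lt_one (by norm_num) (by norm_num : (3 : ℝ)⁻¹ < 1)).mul_right
        ((3 : ℝ)⁻¹ * 3⁻¹)
  have hbound : ∀ n : ℕ, ‖c n * (3 : ℝ)⁻¹ ^ (n + 2)‖ ≤ (3 : ℝ)⁻¹ ^ (n + 2) := by
    intro n
    rw [Real.norm_eq_abs, abs_mul, abs_pow, abs_inv]
    calc |c n| * |(3 : ℝ)|⁻¹ ^ (n + 2) ≤ 1 * |(3 : ℝ)|⁻¹ ^ (n + 2) := by
          apply mul_le_mul_of_nonneg_right (hc n); positivity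
      _ = (3 : ℝ)⁻¹ ^ (n + 2) := by norm_num
  have hs : Summable (fun n : ℕ => ‖c n * (3 : ℝ)⁻¹ ^ (n + 2)‖) :=
    Summable.of_nonneg_of_le (fun n => norm_nonneg _) hbound hg
  calc |∑' n : ℕ, c n * (3 : ℝ)⁻¹ ^ (n + 2)| ≤ ∑' n : ℕ, ‖c n * (3 : ℝ)⁻¹ ^ (n + 2)‖ := by
        simpa [Real.norm_eq_abs] using norm_tsum_le_tsum_norm hs
    _ ≤ ∑' n : ℕ, (3 : ℝ)⁻¹ ^ (n + 2) := Summable.tsum_le_tsum hbound hs hg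
    _ = 6⁻¹ := geom_tail_sum

private lemma digit_step {a b : ℕ → ℝ} (ha : ∀ n, a n = 0 ∨ a n = 1)
    (hb : ∀ n, b n = 0 ∨ b n = 1)
    (h : ∑' n : ℕ, a n * (3 : ℝ)⁻¹ ^ (n + 1) = ∑' n : ℕ, b n * (3 : ℝ)⁻¹ ^ (n + 1)) :
    a 0 = b 0 ∧
      (∑' n : ℕ, a (n + 1) * (3 : ℝ)⁻¹ ^ (n + 1))
        = ∑' n : ℕ, b (n + 1) * (3 : ℝ)⁻¹ ^ (n + 1) := by
  have hsa := digits_summable ha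
  have hsb := digits_summable hb
  have hta : Summable (fun n : ℕ => a (n + 1) * (3 : ℝ)⁻¹ ^ (n + 2)) := by
    have := (digits_summable (fun n => ha (n + 1))).mul_right (3 : ℝ)⁻¹
    apply this.congr
    intro n
    rw [pow_succ]; ring
  have htb : Summable (fun n : ℕ => b (n + 1) * (3 : ℝ)⁻¹ ^ (n + 2)) := by
    have := (digits_summable (fun n => hb (n + 1))).mul_right (3 : ℝ)⁻¹
    apply this.congr
    intro n
    rw [pow_succ]; ring
  have ea : ∑' n : ℕ, a n * (3 : ℝ)⁻¹ ^ (n + 1)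
      = a 0 * 3⁻¹ + ∑' n : ℕ, a (n + 1) * (3 : ℝ)⁻¹ ^ (n + 2) := by
    simpa using Summable.tsum_eq_zero_add hsa
  have eb : ∑' n : ℕ, b n * (3 : ℝ)⁻¹ ^ (n + 1)
      = b 0 * 3⁻¹ + ∑' n : ℕ, b (n + 1) * (3 : ℝ)⁻¹ ^ (n + 2) := by
    simpa using Summable.tsum_eq_zero_add hsb
  have hdiff : a 0 * 3⁻¹ - b 0 * 3⁻¹
      = ∑' n : ℕ, (b (n + 1) - a (n + 1)) * (3 : ℝ)⁻¹ ^ (n + 2) := by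
    have : ∑' n : ℕ, (b (n + 1) - a (n + 1)) * (3 : ℝ)⁻¹ ^ (n + 2)
        = (∑' n : ℕ, b (n + 1) * (3 : ℝ)⁻¹ ^ (n + 2))
          - ∑' n : ℕ, a (n + 1) * (3 : ℝ)⁻¹ ^ (n + 2) := by
      rw [← Summable.tsum_sub htb hta]; exact tsum_congr fun n => by ring
    rw [this]
    have := h
    rw [ea, eb] at this
    linarith
  have hbnd : |a 0 * 3⁻¹ - b 0 * 3⁻¹| ≤ 6⁻¹ := by
    rw [hdiff]
    apply tail_bound
    intro n
    rcases ha (n + 1) with h1 | h1 <;> rcases hb (n + 1) with h2 | h2 <;>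
      rw [h1, h2] <;> norm_num
  have h0 : a 0 = b 0 := by
    rw [abs_le] at hbnd
    rcases ha 0 with h1 | h1 <;> rcases hb 0 with h2 | h2 <;> rw [h1, h2] <;>
      rw [h1, h2] at hbnd <;> first | rfl | linarith [hbnd.1, hbnd.2]
  refine ⟨h0, ?_⟩
  have htail : (∑' n : ℕ, a (n + 1) * (3 : ℝ)⁻¹ ^ (n + 2))
      = ∑' n : ℕ, b (n + 1) * (3 : ℝ)⁻¹ ^ (n + 2) := by
    have := h
    rw [ea, eb, h0] at this
    linarith
  have ka : (∑' n : ℕ, a (n + 1) * (3 : ℝ)⁻¹ ^ (n + 2))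
      = (∑' n : ℕ, a (n + 1) * (3 : ℝ)⁻¹ ^ (n + 1)) * 3⁻¹ := by
    rw [← tsum_mul_right]; exact tsum_congr fun n => by rw [pow_succ]; ring
  have kb : (∑' n : ℕ, b (n + 1) * (3 : ℝ)⁻¹ ^ (n + 2))
      = (∑' n : ℕ, b (n + 1) * (3 : ℝ)⁻¹ ^ (n + 1)) * 3⁻¹ := by
    rw [← tsum_mul_right]; exact tsum_congr fun n => by rw [pow_succ]; ring
  rw [ka, kb] at htail
  exact mul_right_cancel₀ (by norm_num) htail

/-- Uniqueness of ternary digit expansions with digits in `{0, 1}`. -/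
private lemma digit_eq : ∀ (n : ℕ) {a b : ℕ → ℝ}, (∀ m, a m = 0 ∨ a m = 1) →
    (∀ m, b m = 0 ∨ b m = 1) →
    (∑' m : ℕ, a m * (3 : ℝ)⁻¹ ^ (m + 1) = ∑' m : ℕ, b m * (3 : ℝ)⁻¹ ^ (m + 1)) →
    a n = b n := by
  intro n
  induction n with
  | zero => intro a b ha hb h; exact (digit_step ha hb h).1
  | succ n ih =>
    intro a b ha hb h
    exact ih (fun m => ha (m + 1)) (fun m => hb (m + 1)) (digit_step ha hb h).2

end Digits

/-- In an extremally disconnected space, every Borel set differs from a clopen set by a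
meagre set. -/
private lemma exists_clopen_symmDiff_meagre {X : Type*} [TopologicalSpace X]
    [ExtremallyDisconnected X] {s : Set X} (hs : MeasurableSet[borel X] s) :
    ∃ K : Set X, IsClopen K ∧ IsMeagre (symmDiff s K) := by
  letI : MeasurableSpace X := borel X
  haveI : BorelSpace X := ⟨rfl⟩
  obtain ⟨u, hu, hsu⟩ := hs.residualEq_isOpen
  refine ⟨closure u, ⟨isClosed_closure, ExtremallyDisconnected.open_closure u hu⟩, ?_⟩
  have hfr : (frontier u)ᶜ ∈ residual X := by
    apply residual_of_dense_open isClosed_frontier.isOpen_compl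
    rw [← interior_eq_empty_iff_dense_compl]
    rw [← frontier_compl]
    exact interior_frontier hu.isClosed_compl
  have h2 : (u : Set X) =ᶠ[residual X] (closure u : Set X) := by
    apply Filter.mem_of_superset hfr
    intro x hx
    have hx' : x ∉ frontier u := hx
    rw [hu.frontier_eq] at hx'
    show (x ∈ u) = (x ∈ closure u)
    rw [eq_iff_iff]
    constructor
    · exact fun h => subset_closure h
    · intro h
      by_contra hxu
      exact hx' ⟨h, hxu⟩
  have h3 : (s : Set X) =ᶠ[residual X] (closure u : Set X) := hsu.trans h2
  rw [IsMeagre]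
  apply Filter.mem_of_superset h3
  intro x hx
  have hx' : (x ∈ s) = (x ∈ closure u) := hx
  simp only [Set.mem_compl_iff, Set.mem_symmDiff, hx']
  tauto

theorem stmt12 {X : Type*} [TopologicalSpace X] [CompactSpace X] [T2Space X]
    [ExtremallyDisconnected X] :
    (∀ f : C(X, ℝ), Dense (OmegaSet ⇑f)) ↔
      ∀ (M : Type*) [MetricSpace M] [TopologicalSpace.SeparableSpace M],
        ∀ f : X → M, BorelMeasurable f → Dense (OmegaHatSet f) := by
  constructor
  · -- hard direction
    intro hE M _ _ f hf
    haveI : SecondCountableTopology M := UniformSpace.secondCountable_of_separable M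
    obtain ⟨B, hBc, -, hB⟩ := TopologicalSpace.exists_countable_basis M
    obtain ⟨e, he⟩ := (hBc.insert ∅).exists_eq_range (Set.insert_nonempty _ _)
    have hopen : ∀ n, IsOpen (e n) := by
      intro n
      have : e n ∈ insert ∅ B := he ▸ Set.mem_range_self n
      rcases this with h | h
      · rw [h]; exact isOpen_empty
      · exact hB.isOpen h
    have key : ∀ n, ∃ K : Set X, IsClopen K ∧ IsMeagre (symmDiff (f ⁻¹' e n) K) :=
      fun n => exists_clopen_symmDiff_meagre (hf (e n) (hopen n))
    choose K hK1 hK2 using key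
    have hg : Summable (fun n : ℕ => (3 : ℝ)⁻¹ ^ (n + 1)) := by
      simpa [pow_succ] using
        (summable_geometric_of_lt_one (by norm_num) (by norm_num : (3 : ℝ)⁻¹ < 1)).mul_right
          (3 : ℝ)⁻¹
    classical
    set h : X → ℝ := fun x => ∑' n : ℕ, (K n).indicator (fun _ => (3 : ℝ)⁻¹ ^ (n + 1)) x with hh
    have hcont : Continuous h := by
      refine continuous_tsum (fun n => ?_) hg (fun n x => ?_)
      · have : Continuous (fun x => if x ∈ K n then (3 : ℝ)⁻¹ ^ (n + 1) else 0) := by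
          refine Continuous.if (fun a ha => ?_) continuous_const continuous_const
          have hfr : frontier {x | x ∈ K n} = (∅ : Set X) := (hK1 n).frontier_eq
          rw [hfr] at ha
          exact absurd ha (Set.notMem_empty a)
        convert this using 1
        ext x; simp only [Set.indicator_apply]
      · rw [Real.norm_eq_abs, Set.indicator_apply]
        split_ifs
        · rw [abs_of_nonneg (by positivity)]
        · rw [abs_zero]; positivity
    have hdense := hE ⟨h, hcont⟩
    refine Dense.mono ?_ hdense
    rintro x ⟨U, ⟨hU, hconst⟩, hxU⟩
    refine ⟨U, ⟨hU, ⋃ n, symmDiff (f ⁻¹' e n) (K n), isMeagre_iUnion hK2, ?_⟩, hxU⟩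
    intro p hp q hq
    by_contra hne
    -- find a basic set separating f p and f q
    obtain ⟨V, hVB, hpV, hVsub⟩ := hB.exists_subset_of_mem_open
      (Metric.mem_ball_self (dist_pos.2 hne)) Metric.isOpen_ball
    have hVmem : V ∈ Set.range e := he ▸ Set.mem_insert_of_mem _ hVB
    obtain ⟨n, rfl⟩ := hVmem
    have hqV : f q ∉ e n := by
      intro hmem
      have := hVsub hmem
      rw [Metric.mem_ball, dist_comm] at this
      exact lt_irrefl _ this
    -- translate membership through the clopen approximation
    have hpK : p ∈ K n := by
      have hns : p ∉ symmDiff (f ⁻¹' e n) (K n) :=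
        fun hc => hp.2 (Set.mem_iUnion.2 ⟨n, hc⟩)
      rw [Set.mem_symmDiff] at hns
      by_contra hpc
      exact hns (Or.inl ⟨hpV, hpc⟩)
    have hqK : q ∉ K n := by
      have hns : q ∉ symmDiff (f ⁻¹' e n) (K n) :=
        fun hc => hq.2 (Set.mem_iUnion.2 ⟨n, hc⟩)
      rw [Set.mem_symmDiff] at hns
      intro hqc
      exact hns (Or.inr ⟨hqc, hqV⟩)
    -- digit sequences
    set a : ℕ → ℝ := fun m => if p ∈ K m then 1 else 0 with haa
    set b : ℕ → ℝ := fun m => if q ∈ K m then 1 else 0 with hbb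
    have ha : ∀ m, a m = 0 ∨ a m = 1 := by
      intro m; by_cases hm : p ∈ K m <;> simp [haa, hm]
    have hb : ∀ m, b m = 0 ∨ b m = 1 := by
      intro m; by_cases hm : q ∈ K m <;> simp [hbb, hm]
    have hpa : h p = ∑' m : ℕ, a m * (3 : ℝ)⁻¹ ^ (m + 1) := by
      rw [hh]
      exact tsum_congr fun m => by
        by_cases hm : p ∈ K m <;> simp [Set.indicator_apply, hm, haa]
    have hqb : h q = ∑' m : ℕ, b m * (3 : ℝ)⁻¹ ^ (m + 1) := by
      rw [hh]
      exact tsum_congr fun m => by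
        by_cases hm : q ∈ K m <;> simp [Set.indicator_apply, hm, hbb]
    have hsum : ∑' m : ℕ, a m * (3 : ℝ)⁻¹ ^ (m + 1) = ∑' m : ℕ, b m * (3 : ℝ)⁻¹ ^ (m + 1) := by
      rw [← hpa, ← hqb]
      exact hconst p hp.1 q hq.1
    have := digit_eq n ha hb hsum
    rw [haa, hbb] at this
    simp only [hpK, hqK, if_true, if_false] at this
    exact one_ne_zero this
  · -- easy direction
    intro hR f
    haveI : SecondCountableTopology (ULift.{u_2} ℝ) :=
      Homeomorph.ulift.isEmbedding.secondCountableTopology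
    haveI : TopologicalSpace.SeparableSpace (ULift.{u_2} ℝ) :=
      TopologicalSpace.SecondCountableTopology.to_separableSpace
    have hup : Continuous (ULift.up.{u_2} : ℝ → ULift ℝ) := Homeomorph.ulift.symm.continuous
    have hfB : BorelMeasurable (fun x => ULift.up.{u_2} (f x)) := fun V hV =>
      MeasurableSpace.measurableSet_generateFrom
        ((hV.preimage hup).preimage f.continuous)
    have hD := hR (ULift.{u_2} ℝ) (fun x => ULift.up (f x)) hfB
    refine Dense.mono ?_ hD
    rintro x ⟨U, ⟨hU, C, hC, hconst⟩, hxU⟩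
    refine ⟨U, ⟨hU, ?_⟩, hxU⟩
    intro p hp q hq
    have hCc : Dense (Cᶜ : Set X) := dense_of_mem_residual hC
    have hclosure : ∀ z ∈ U, z ∈ closure (U \ C) := by
      intro z hz
      rw [mem_closure_iff]
      intro O hO hzO
      obtain ⟨w, hw⟩ := hCc.inter_open_nonempty (O ∩ U) (hO.inter hU) ⟨z, hzO, hz⟩
      exact ⟨w, hw.1.1, hw.1.2, hw.2⟩
    obtain ⟨w, hw⟩ : (U \ C).Nonempty := by
      obtain ⟨w, hw⟩ := hCc.inter_open_nonempty U hU ⟨p, hp⟩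
      exact ⟨w, hw.1, hw.2⟩
    have hkey : ∀ z ∈ U, f z = f w := by
      intro z hz
      have hcl : IsClosed {y : X | f y = f w} := isClosed_eq f.continuous continuous_const
      have hsub : U \ C ⊆ {y : X | f y = f w} := fun y hy =>
        congrArg ULift.down (hconst y hy w hw)
      exact (closure_minimal hsub hcl) (hclosure z hz)
    rw [hkey p hp, hkey q hq]
end

section
/- Let X be a compact Hausdorff zero-dimensional space (the clopen subsets form a basis for the topology). Then E_0(X,ℝ) = C(X,ℝ) if and only if for every metric space M, E_0(X,M) = C(X,M). -/
/-- The indicator function of a clopen set is continuous. -/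
lemma indicator_clopen_continuous {X : Type*} [TopologicalSpace X] {s : Set X}
    (hs : IsClopen s) : Continuous (s.indicator (fun _ => (1 : ℝ))) := by
  classical
  have h1 : s.indicator (fun _ => (1 : ℝ)) = fun x => if x ∈ s then (1 : ℝ) else 0 := by
    ext x
    by_cases h : x ∈ s <;> simp [Set.indicator, h]
  rw [h1]
  apply Continuous.if
  · intro a ha
    rw [show {x | x ∈ s} = s from rfl, hs.frontier_eq] at ha
    exact absurd ha (Set.notMem_empty a)
  · exact continuous_const
  · exact continuous_const

theorem stmt13 {X : Type*} [TopologicalSpace X] [CompactSpace X] [T2Space X]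
    (hX : TopologicalSpace.IsTopologicalBasis {U : Set X | IsClopen U}) :
    (∀ f : C(X, ℝ), Dense (OmegaSet ⇑f)) ↔
      ∀ (M : Type*) [MetricSpace M], ∀ f : C(X, M), Dense (OmegaSet ⇑f) := by
  classical
  constructor
  · intro h M _ f
    rw [dense_iff_inter_open]
    intro U hU hUne
    by_contra hcon
    obtain ⟨x₀, hx₀⟩ := hUne
    obtain ⟨V, hVmem, hx₀V, hVU⟩ := hX.exists_subset_of_mem_open hx₀ hU
    have hVclopen : IsClopen V := hVmem
    have hVne : V.Nonempty := ⟨x₀, hx₀V⟩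
    -- f is non-constant on every open set meeting V
    have hnc : ∀ O : Set X, IsOpen O → (O ∩ V).Nonempty →
        ∃ x ∈ O ∩ V, ∃ y ∈ O ∩ V, f x ≠ f y := by
      intro O hO hOV
      by_contra hc
      push_neg at hc
      apply hcon
      obtain ⟨z, hz⟩ := hOV
      exact ⟨z, hVU hz.2, Set.mem_sUnion.mpr ⟨O ∩ V, ⟨hO.inter hVclopen.isOpen,
        fun a ha b hb => hc a ha b hb⟩, hz⟩⟩
    have hVcomp : IsCompact V := hVclopen.isClosed.isCompact
    -- fine clopen covers of V
    have key : ∀ n : ℕ, ∃ (s : Finset X) (W : X → Set X),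
        (∀ c ∈ s, IsClopen (W c)) ∧ (V ⊆ ⋃ c ∈ s, W c) ∧
        (∀ c ∈ s, ∀ x ∈ W c, ∀ y ∈ W c, dist (f x) (f y) ≤ 1 / (n + 1)) := by
      intro n
      have hpos : (0:ℝ) < 1 / (2 * (n + 1)) := by positivity
      have hcov : ∀ x : X, x ∈ V → ∃ C : Set X, IsClopen C ∧ x ∈ C ∧
          C ⊆ f ⁻¹' (Metric.ball (f x) (1 / (2 * (n + 1)))) := by
        intro x hx
        have hb : x ∈ f ⁻¹' (Metric.ball (f x) (1 / (2 * (n + 1)))) :=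
          Metric.mem_ball_self hpos
        have ho : IsOpen (f ⁻¹' (Metric.ball (f x) (1 / (2 * (n + 1))))) :=
          Metric.isOpen_ball.preimage f.continuous
        obtain ⟨C, hC, hxC, hCs⟩ := hX.exists_subset_of_mem_open hb ho
        exact ⟨C, hC, hxC, hCs⟩
      choose! C hC1 hC2 hC3 using hcov
      obtain ⟨t, ht⟩ := hVcomp.elim_finite_subcover (fun v : ↥V => C v)
        (fun v => (hC1 v v.2).isOpen) (fun x hx => Set.mem_iUnion.mpr ⟨⟨x, hx⟩, hC2 x hx⟩)
      refine ⟨t.image Subtype.val, C, ?_, ?_, ?_⟩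
      · intro c hc
        obtain ⟨v, hv, rfl⟩ := Finset.mem_image.mp hc
        exact hC1 v v.2
      · intro x hx
        obtain ⟨v, hv1, hv2⟩ := Set.mem_iUnion₂.mp (ht hx)
        exact Set.mem_iUnion₂.mpr ⟨v, Finset.mem_image_of_mem _ hv1, hv2⟩
      · intro c hc x hxc y hyc
        obtain ⟨v, hv, rfl⟩ := Finset.mem_image.mp hc
        have hx' : dist (f x) (f (v:X)) < 1 / (2 * (n + 1)) :=
          Metric.mem_ball.mp (hC3 v v.2 hxc)
        have hy' : dist (f y) (f (v:X)) < 1 / (2 * (n + 1)) :=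
          Metric.mem_ball.mp (hC3 v v.2 hyc)
        have htri : dist (f x) (f y) ≤ dist (f x) (f (v:X)) + dist (f y) (f (v:X)) :=
          dist_triangle_right _ _ _
        have : 1 / (2 * ((n:ℝ) + 1)) + 1 / (2 * ((n:ℝ) + 1)) = 1 / ((n:ℝ) + 1) := by
          have hne0 : (n:ℝ) + 1 ≠ 0 := by positivity
          field_simp
          norm_num
        linarith
    choose s W hWclopen hWcover hWdiam using key
    set J := Σ n : ℕ, {c : X // c ∈ s n} with hJdef
    have hJc : Countable J := by infer_instance
    obtain ⟨e, he⟩ := exists_injective_nat J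
    set WW : J → Set X := fun j => W j.1 j.2.1 ∩ V with hWWdef
    have hWWclopen : ∀ j, IsClopen (WW j) :=
      fun j => (hWclopen j.1 j.2.1 j.2.2).inter hVclopen
    set p : X → J → ℝ := fun x j => (WW j).indicator (fun _ => (1:ℝ)) x with hpdef
    have hp01 : ∀ x j, p x j = 0 ∨ p x j = 1 := by
      intro x j
      by_cases hx : x ∈ WW j
      · right; simp [hpdef, Set.indicator_of_mem hx]
      · left; simp [hpdef, Set.indicator_of_notMem hx]
    set u : J → ℝ := fun j => (1/4 : ℝ) ^ (e j) with hudef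
    have hunn : ∀ j, 0 ≤ u j := fun j => by positivity
    have hu : Summable u :=
      (summable_geometric_of_lt_one (by norm_num) (by norm_num)).comp_injective he
    have hbound : ∀ (j : J) (x : X), ‖u j * p x j‖ ≤ u j := by
      intro j x
      rw [norm_mul]
      rcases hp01 x j with h0 | h1
      · rw [h0]; simp [hunn j]
      · rw [h1]; simp [abs_of_nonneg (hunn j)]
    have hsummable : ∀ x : X, Summable (fun j => u j * p x j) :=
      fun x => Summable.of_norm_bounded hu (fun j => hbound j x)
    set g : X → ℝ := fun x => ∑' j, u j * p x j with hgdef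
    have hgcont : Continuous g := by
      apply continuous_tsum (fun j => ?_) hu (fun j x => hbound j x)
      exact continuous_const.mul (indicator_clopen_continuous (hWWclopen j))
    have hsep : ∀ x y : X, (∃ j, p x j ≠ p y j) → g x ≠ g y := by
      intro x y hne hg
      have hex : ∃ m, ∃ j, e j = m ∧ p x j ≠ p y j := by
        obtain ⟨j, hj⟩ := hne; exact ⟨e j, j, rfl, hj⟩
      set k := Nat.find hex with hkdef
      obtain ⟨j₀, hj₀e, hj₀⟩ := Nat.find_spec hex
      set hh : J → ℝ := fun j => u j * p x j - u j * p y j with hhdef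
      have hhsum : Summable hh := (hsummable x).sub (hsummable y)
      have hhle : ∀ j, ‖hh j‖ ≤ u j := by
        intro j
        have heq1 : hh j = u j * (p x j - p y j) := by rw [hhdef]; ring
        rw [heq1, norm_mul]
        have h2 : ‖p x j - p y j‖ ≤ 1 := by
          rcases hp01 x j with h|h <;> rcases hp01 y j with h'|h' <;>
            rw [h, h'] <;> norm_num
        calc ‖u j‖ * ‖p x j - p y j‖ ≤ ‖u j‖ * 1 :=
              mul_le_mul_of_nonneg_left h2 (norm_nonneg _)
          _ = u j := by rw [mul_one, Real.norm_eq_abs, abs_of_nonneg (hunn j)]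
      have hzero : ∑' j, hh j = 0 := by
        have h1 : ∑' j, hh j = (∑' j, u j * p x j) - (∑' j, u j * p y j) :=
          Summable.tsum_sub (hsummable x) (hsummable y)
        have h2 : (∑' j, u j * p x j) = ∑' j, u j * p y j := hg
        rw [h1, h2, sub_self]
      have hsplit : ∑' j, hh j = hh j₀ + ∑' j, ite (j = j₀) 0 (hh j) :=
        Summable.tsum_eq_add_tsum_ite hhsum j₀
      have habs0 : |hh j₀| = (1/4:ℝ)^k := by
        have heq1 : hh j₀ = u j₀ * (p x j₀ - p y j₀) := by rw [hhdef]; ring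
        rw [heq1, abs_mul]
        have h1 : |p x j₀ - p y j₀| = 1 := by
          rcases hp01 x j₀ with h|h <;> rcases hp01 y j₀ with h'|h' <;>
            rw [h, h'] at hj₀ ⊢ <;> simp only [ne_eq, not_true_eq_false] at hj₀ <;> norm_num
        rw [h1, mul_one, abs_of_nonneg (hunn j₀), hudef]
        simp only [hj₀e]
        rfl
      set φ : ℕ → ℝ := fun m => if m ≤ k then 0 else (1/4:ℝ)^m with hφdef
      have hφnn : ∀ m, 0 ≤ φ m := by
        intro m; rw [hφdef]; dsimp only; split <;> positivity
      have hφle : ∀ m, φ m ≤ (1/4:ℝ)^m := by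
        intro m; rw [hφdef]; dsimp only; split
        · positivity
        · exact le_refl _
      have hφsum : Summable φ :=
        Summable.of_nonneg_of_le hφnn hφle
          (summable_geometric_of_lt_one (by norm_num) (by norm_num))
      have hnorm_sum : Summable (fun j => ‖ite (j = j₀) 0 (hh j)‖) := by
        apply Summable.of_nonneg_of_le (fun j => norm_nonneg _) (fun j => ?_) hu
        split
        · simpa using hunn _
        · exact hhle _
      have htail : |∑' j, ite (j = j₀) 0 (hh j)| ≤ ∑' m, φ m := by
        calc |∑' j, ite (j = j₀) 0 (hh j)| ≤ ∑' j, ‖ite (j = j₀) 0 (hh j)‖ :=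
            norm_tsum_le_tsum_norm hnorm_sum
          _ ≤ ∑' m, φ m := by
            apply Summable.tsum_le_tsum_of_inj e he (fun m _ => hφnn m) (fun j => ?_)
              hnorm_sum hφsum
            by_cases hj : j = j₀
            · subst hj
              rw [if_pos rfl, hφdef, hj₀e]
              dsimp only
              rw [if_pos (le_refl k)]
              simp
            · rw [if_neg hj]
              by_cases hpj : p x j = p y j
              · have hz : hh j = 0 := by rw [hhdef]; dsimp only; rw [hpj]; ring
                rw [hz]; simpa using hφnn _
              · have hkle : k < e j := by
                  have h1 : k ≤ e j := Nat.find_min' hex ⟨j, rfl, hpj⟩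
                  rcases lt_or_eq_of_le h1 with h|h
                  · exact h
                  · exact absurd (he (hj₀e.trans h)) (Ne.symm hj)
                have hφe : φ (e j) = (1/4:ℝ)^(e j) := by
                  rw [hφdef]; simp [Nat.not_le.mpr hkle]
                rw [hφe]
                calc ‖hh j‖ ≤ u j := hhle j
                  _ = (1/4:ℝ)^(e j) := by rw [hudef]
      have hφval : ∑' m, φ m = (1/3:ℝ) * (1/4)^k := by
        have h2 := Summable.sum_add_tsum_nat_add (f := φ) (k+1) hφsum
        have hzero' : ∑ i ∈ Finset.range (k+1), φ i = 0 := by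
          apply Finset.sum_eq_zero; intro i hi
          rw [hφdef]; simp [Nat.le_of_lt_succ (Finset.mem_range.mp hi)]
        have hshift : ∀ i : ℕ, φ (i + (k+1)) = (1/4:ℝ)^(k+1) * (1/4)^i := by
          intro i; rw [hφdef]
          have hni : ¬ (i + (k+1) ≤ k) := by omega
          simp only [hni, if_false]
          rw [pow_add]; ring
        rw [hzero', zero_add] at h2
        rw [← h2, tsum_congr hshift, tsum_mul_left,
          tsum_geometric_of_lt_one (by norm_num) (by norm_num)]
        rw [pow_succ]
        norm_num
        ring
      have hpow : (0:ℝ) < (1/4)^k := by positivity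
      rw [hzero] at hsplit
      have hj0eq : hh j₀ = - ∑' j, ite (j = j₀) 0 (hh j) := by linarith
      rw [hj0eq, abs_neg] at habs0
      rw [hφval] at htail
      rw [habs0] at htail
      linarith
    have hd := h ⟨g, hgcont⟩
    rw [dense_iff_inter_open] at hd
    obtain ⟨z, hzV, hzO⟩ := hd V hVclopen.isOpen hVne
    obtain ⟨A, ⟨hAopen, hAconst⟩, hzA⟩ := Set.mem_sUnion.mp hzO
    obtain ⟨x, hx, y, hy, hfxy⟩ := hnc A hAopen ⟨z, hzA, hzV⟩
    have hpxy : ∃ j, p x j ≠ p y j := by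
      by_contra hpe
      push_neg at hpe
      apply hfxy
      have hdist : ∀ n : ℕ, dist (f x) (f y) ≤ 1 / (n + 1) := by
        intro n
        obtain ⟨c, hc, hxW⟩ := Set.mem_iUnion₂.mp (hWcover n hx.2)
        have hxWW : x ∈ WW ⟨n, ⟨c, hc⟩⟩ := ⟨hxW, hx.2⟩
        have h1 : p x ⟨n, ⟨c, hc⟩⟩ = 1 := by
          rw [hpdef]; exact Set.indicator_of_mem hxWW _
        have h2 : p y ⟨n, ⟨c, hc⟩⟩ = 1 := by rw [← hpe _]; exact h1
        have hyWW : y ∈ WW ⟨n, ⟨c, hc⟩⟩ := by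
          by_contra hynot
          rw [hpdef] at h2
          dsimp only at h2
          rw [Set.indicator_of_notMem hynot] at h2
          norm_num at h2
        exact hWdiam n c hc x hxW y hyWW.1
      have hle0 : dist (f x) (f y) ≤ 0 := by
        apply le_of_forall_pos_le_add
        intro ε hε
        obtain ⟨n, hn⟩ := exists_nat_one_div_lt hε
        calc dist (f x) (f y) ≤ 1 / (n + 1) := hdist n
          _ ≤ 0 + ε := by linarith
      exact dist_le_zero.mp hle0
    exact hsep x y hpxy (hAconst x hx.1 y hy.1)
  · intro h f
    have hcf : Continuous fun x => ULift.up.{_,0} (f x) := continuous_uliftUp.comp f.continuous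
    have hd : Dense (OmegaSet fun x => ULift.up.{_,0} (f x)) := by
      simpa using h (ULift ℝ) ⟨fun x => ULift.up (f x), hcf⟩
    have heq : OmegaSet (fun x => ULift.up.{_,0} (f x)) = OmegaSet ⇑f := by
      unfold OmegaSet
      ext O
      simp [ULift.up_injective.eq_iff]
    rwa [heq] at hd
end

section
/- Let X be a compact linearly ordered topological space (a linear order with its order topology, compact). Then the following are equivalent: (i) every nonempty open subset of X is either nonseparable or contains an isolated point; (ii) for every metric space M, E_0(X,M) = C(X,M). -/
open Set Filter Topology TopologicalSpace

section Aux

variable {X : Type*} [LinearOrder X] [TopologicalSpace X] [OrderTopology X]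

/-- In a compact LOTS, there is no interleaved increasing pair of sequences taking values in
two disjoint closed sets. -/
lemma aux_no_interleaved_inc [CompactSpace X] {A B : Set X} (hA : IsClosed A) (hB : IsClosed B)
    (hd : Disjoint A B) (a b : ℕ → X) (ha : ∀ n, a n ∈ A) (hb : ∀ n, b n ∈ B)
    (hab : ∀ n, a n ≤ b n) (hba : ∀ n, b n < a (n + 1)) : False := by
  have hma : Monotone a := monotone_nat_of_le_succ fun n => (hab n).trans (hba n).le
  have hmb : Monotone b := monotone_nat_of_le_succ fun n => ((hba n).trans_le (hab (n + 1))).le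
  obtain ⟨z, -, hz⟩ := (isClosed_closure (s := Set.range a)).isCompact.exists_isLUB
    (Set.range_nonempty a).closure
  have hzA : IsLUB (Set.range a) z := by
    constructor
    · exact fun w hw => hz.1 (subset_closure hw)
    · exact fun w hw => hz.2 fun c hc => (closure_minimal hw isClosed_Iic) hc
  have hzB : IsLUB (Set.range b) z := by
    constructor
    · rintro w ⟨n, rfl⟩
      exact (hba n).le.trans (hzA.1 ⟨n + 1, rfl⟩)
    · rintro w hw
      refine hzA.2 ?_
      rintro c ⟨n, rfl⟩
      exact (hab n).trans (hw ⟨n, rfl⟩)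
  have haz : Filter.Tendsto a Filter.atTop (nhds z) := tendsto_atTop_isLUB hma hzA
  have hbz : Filter.Tendsto b Filter.atTop (nhds z) := tendsto_atTop_isLUB hmb hzB
  exact (hd.ne_of_mem (hA.mem_of_tendsto haz (Filter.Eventually.of_forall ha))
    (hB.mem_of_tendsto hbz (Filter.Eventually.of_forall hb))) rfl

/-- Decreasing version of `aux_no_interleaved_inc`. -/
lemma aux_no_interleaved_dec [CompactSpace X] {A B : Set X} (hA : IsClosed A) (hB : IsClosed B)
    (hd : Disjoint A B) (a b : ℕ → X) (ha : ∀ n, a n ∈ A) (hb : ∀ n, b n ∈ B)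
    (hab : ∀ n, a n ≤ b n) (hba : ∀ n, b (n + 1) < a n) : False := by
  have hma : Antitone a := antitone_nat_of_succ_le fun n => (hab (n + 1)).trans (hba n).le
  have hmb : Antitone b := antitone_nat_of_succ_le fun n => (hba n).le.trans (hab n)
  obtain ⟨z, -, hz⟩ := (isClosed_closure (s := Set.range a)).isCompact.exists_isGLB
    (Set.range_nonempty a).closure
  have hzA : IsGLB (Set.range a) z := by
    constructor
    · exact fun w hw => hz.1 (subset_closure hw)
    · exact fun w hw => hz.2 fun c hc => (closure_minimal hw isClosed_Ici) hc
  have hzB : IsGLB (Set.range b) z := by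
    constructor
    · rintro w ⟨n, rfl⟩
      exact (hzA.1 ⟨n, rfl⟩).trans (hab n)
    · rintro w hw
      refine hzA.2 ?_
      rintro c ⟨n, rfl⟩
      exact (hw ⟨n + 1, rfl⟩).trans (hba n).le
  have haz : Filter.Tendsto a Filter.atTop (nhds z) := tendsto_atTop_isGLB hma hzA
  have hbz : Filter.Tendsto b Filter.atTop (nhds z) := tendsto_atTop_isGLB hmb hzB
  exact (hd.ne_of_mem (hA.mem_of_tendsto haz (Filter.Eventually.of_forall ha))
    (hB.mem_of_tendsto hbz (Filter.Eventually.of_forall hb))) rfl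

/-- The set of "transition pairs" between `A` and `B`. -/
def ZSet (A B : Set X) : Set (X × X) :=
  {p | p.1 < p.2 ∧ p.1 ∈ A ∧ p.2 ∈ B ∧ Set.Ioo p.1 p.2 ∩ A = ∅ ∧ Set.Ioo p.1 p.2 ∩ B = ∅}

lemma aux_zset_lt {A B : Set X} (hd : Disjoint A B) {p q : X × X} (hp : p ∈ ZSet A B)
    (hq : q ∈ ZSet A B) (h : p.1 < q.1) : p.2 < q.1 := by
  rcases lt_trichotomy q.1 p.2 with h1 | h1 | h1
  · exact absurd (show q.1 ∈ Set.Ioo p.1 p.2 ∩ A from ⟨⟨h, h1⟩, hq.2.1⟩)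
      (by rw [hp.2.2.2.1]; exact Set.notMem_empty _)
  · exact absurd (h1 ▸ hq.2.1) (fun hmem => (hd.ne_of_mem hmem hp.2.2.1) rfl)
  · exact h1

lemma aux_zset_disjoint {A B : Set X} (hd : Disjoint A B) {p q : X × X} (hp : p ∈ ZSet A B)
    (hq : q ∈ ZSet A B) (hne : p ≠ q) : p.2 < q.1 ∨ q.2 < p.1 := by
  rcases lt_trichotomy p.1 q.1 with h | h | h
  · exact Or.inl (aux_zset_lt hd hp hq h)
  · exfalso
    rcases lt_trichotomy p.2 q.2 with h2 | h2 | h2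
    · exact absurd (show p.2 ∈ Set.Ioo q.1 q.2 ∩ B from ⟨⟨h ▸ hp.1, h2⟩, hp.2.2.1⟩)
        (by rw [hq.2.2.2.2]; exact Set.notMem_empty _)
    · exact hne (Prod.ext h h2)
    · exact absurd (show q.2 ∈ Set.Ioo p.1 p.2 ∩ B from ⟨⟨h ▸ hq.1, h2⟩, hq.2.2.1⟩)
        (by rw [hp.2.2.2.2]; exact Set.notMem_empty _)
  · exact Or.inr (aux_zset_lt hd hq hp h)

lemma aux_zset_finite [CompactSpace X] {A B : Set X} (hA : IsClosed A) (hB : IsClosed B)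
    (hd : Disjoint A B) : (ZSet A B).Finite := by
  rw [← Set.not_infinite]
  intro hinf
  have e := hinf.natEmbedding
  set P : ℕ → X × X := fun n => (e n : X × X) with hP
  have hmem : ∀ n, P n ∈ ZSet A B := fun n => (e n).2
  have hPinj : Function.Injective P := fun m n h => e.injective (Subtype.ext h)
  have hvinj : Function.Injective (fun n => (P n).2) := by
    intro m n h
    have h' : (P m).2 = (P n).2 := h
    by_contra hmn
    have hPne : P m ≠ P n := fun hh => hmn (hPinj hh)
    rcases aux_zset_disjoint hd (hmem m) (hmem n) hPne with h2 | h2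
    · have h3 := h2.trans (hmem n).1
      rw [h'] at h3
      exact lt_irrefl _ h3
    · have h3 := h2.trans (hmem m).1
      rw [← h'] at h3
      exact lt_irrefl _ h3
  haveI : IsTrans X (· < ·) := ⟨fun _ _ _ h h' => lt_trans h h'⟩
  obtain ⟨g, hg | hg⟩ :=
    exists_increasing_or_nonincreasing_subseq ((· < ·) : X → X → Prop) (fun n => (P n).2)
  · refine aux_no_interleaved_inc hA hB hd (fun n => (P (g n)).1) (fun n => (P (g n)).2)
      (fun n => (hmem _).2.1) (fun n => (hmem _).2.2.1) (fun n => (hmem _).1.le) ?_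
    intro n
    have hgn := hg n (n + 1) (Nat.lt_succ_self n)
    have hPne : P (g n) ≠ P (g (n + 1)) := fun hh => (lt_irrefl _ (hh ▸ hgn))
    rcases aux_zset_disjoint hd (hmem (g n)) (hmem (g (n + 1))) hPne with h2 | h2
    · exact h2
    · exact absurd hgn (not_lt.2 (h2.trans (hmem (g n)).1).le)
  · have hdec : ∀ n, (P (g (n + 1))).2 < (P (g n)).2 := by
      intro n
      rcases lt_trichotomy ((P (g (n + 1))).2) ((P (g n)).2) with h | h | h
      · exact h
      · exact absurd (hvinj h) (g.strictMono (Nat.lt_succ_self n)).ne'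
      · exact absurd h (hg n (n + 1) (Nat.lt_succ_self n))
    refine aux_no_interleaved_dec hA hB hd (fun n => (P (g n)).1) (fun n => (P (g n)).2)
      (fun n => (hmem _).2.1) (fun n => (hmem _).2.2.1) (fun n => (hmem _).1.le) ?_
    intro n
    have hPne : P (g n) ≠ P (g (n + 1)) :=
      fun hh => (hdec n).ne ((congrArg Prod.snd hh).symm)
    rcases aux_zset_disjoint hd (hmem (g n)) (hmem (g (n + 1))) hPne with h2 | h2
    · exact absurd (hdec n) (not_lt.2 (h2.trans (hmem (g (n + 1))).1).le)
    · exact h2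

/-- In a LOTS, every neighbourhood contains an order-connected open neighbourhood. -/
lemma aux_convex_nbhd {w : X} {N : Set X} (hN : N ∈ nhds w) :
    ∃ P : Set X, IsOpen P ∧ P.OrdConnected ∧ w ∈ P ∧ P ⊆ N := by
  have hb := TopologicalSpace.isTopologicalBasis_of_subbasis
    (OrderTopology.topology_eq_generate_intervals (α := X))
  obtain ⟨t, ht, hwt, htN⟩ := hb.mem_nhds_iff.1 hN
  obtain ⟨F, ⟨hFfin, hFsub⟩, rfl⟩ := ht
  refine ⟨⋂₀ F, hb.isOpen ⟨F, ⟨hFfin, hFsub⟩, rfl⟩, Set.ordConnected_sInter ?_, hwt, htN⟩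
  intro s hs
  rcases hFsub hs with ⟨a, rfl | rfl⟩
  exacts [Set.ordConnected_Ioi, Set.ordConnected_Iio]

/-- Key lemma: if a continuous map into a metric space is non-constant on every nonempty open
subset of the open set `V` of a compact LOTS, then `V` is separable. -/
lemma aux_separable [CompactSpace X] {M : Type*} [MetricSpace M] (f : C(X, M)) {V : Set X}
    (hV : IsOpen V)
    (hnc : ∀ U : Set X, IsOpen U → U.Nonempty → U ⊆ V → ∃ x ∈ U, ∃ y ∈ U, f x ≠ f y) :
    TopologicalSpace.SeparableSpace ↥V := by
  classical
  obtain ⟨D, hDc, hDd⟩ := (isCompact_range f.continuous).isSeparable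
  set A : M → ℚ → Set X := fun d q => f ⁻¹' (Metric.closedBall d (q : ℝ)) with hA
  have hAcl : ∀ d q, IsClosed (A d q) := fun d q =>
    Metric.isClosed_closedBall.preimage f.continuous
  set Z : M → ℚ → M → ℚ → Set X := fun d₁ q₁ d₂ q₂ =>
    if hdsj : Disjoint (A d₁ q₁) (A d₂ q₂) then
      (Prod.fst '' ZSet (A d₁ q₁) (A d₂ q₂)) ∪ (Prod.snd '' ZSet (A d₁ q₁) (A d₂ q₂))
    else ∅ with hZ
  have hZfin : ∀ d₁ q₁ d₂ q₂, (Z d₁ q₁ d₂ q₂).Finite := by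
    intro d₁ q₁ d₂ q₂
    by_cases hdsj : Disjoint (A d₁ q₁) (A d₂ q₂)
    · simp only [hZ, dif_pos hdsj]
      exact ((aux_zset_finite (hAcl _ _) (hAcl _ _) hdsj).image _).union
        ((aux_zset_finite (hAcl _ _) (hAcl _ _) hdsj).image _)
    · simp only [hZ, dif_neg hdsj]
      exact Set.finite_empty
  set S : Set X := V ∩ ⋃ d₁ ∈ D, ⋃ d₂ ∈ D, ⋃ q₁ : ℚ, ⋃ q₂ : ℚ, Z d₁ q₁ d₂ q₂ with hS
  have hScnt : S.Countable := by
    refine Set.Countable.mono Set.inter_subset_right ?_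
    exact hDc.biUnion fun d₁ _ => hDc.biUnion fun d₂ _ =>
      Set.countable_iUnion fun q₁ => Set.countable_iUnion fun q₂ => (hZfin _ _ _ _).countable
  have key : ∀ N : Set X, IsOpen N → (N ∩ V).Nonempty → (N ∩ S).Nonempty := by
    intro N hN hNV
    obtain ⟨v, hvN, hvV⟩ := hNV
    obtain ⟨P₀, hP₀o, hP₀c, hvP₀, hP₀N⟩ := aux_convex_nbhd (hN.mem_nhds hvN)
    set C : Set X := {w | w ∈ V ∧ Set.uIcc v w ⊆ V} with hC
    have hCo : IsOpen C := by
      rw [isOpen_iff_mem_nhds]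
      intro w hw
      obtain ⟨P, hPo, hPc, hwP, hPV⟩ := aux_convex_nbhd (hV.mem_nhds hw.1)
      refine Filter.mem_of_superset (hPo.mem_nhds hwP) ?_
      intro u hu
      refine ⟨hPV hu, ?_⟩
      refine (Set.uIcc_subset_uIcc_union_uIcc (b := w)).trans ?_
      exact Set.union_subset hw.2 ((hPc.uIcc_subset hwP hu).trans hPV)
    have hCc : Set.OrdConnected C := by
      constructor
      intro x hx y hy t ht
      have htx : Set.uIcc x t ⊆ Set.uIcc x y :=
        (Set.ordConnected_uIcc).uIcc_subset Set.left_mem_uIcc (Set.Icc_subset_uIcc ht)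
      have hxyV : Set.uIcc x y ⊆ V := by
        refine (Set.uIcc_subset_uIcc_union_uIcc (b := v)).trans ?_
        refine Set.union_subset ?_ hy.2
        rw [Set.uIcc_comm]; exact hx.2
      refine ⟨hxyV (Set.Icc_subset_uIcc ht), ?_⟩
      exact (Set.uIcc_subset_uIcc_union_uIcc (b := x)).trans
        (Set.union_subset hx.2 (htx.trans hxyV))
    have hvC : v ∈ C := ⟨hvV, by rw [Set.uIcc_self]; exact Set.singleton_subset_iff.2 hvV⟩
    set P : Set X := P₀ ∩ C with hPdef
    have hPo : IsOpen P := hP₀o.inter hCo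
    have hPc : Set.OrdConnected P := hP₀c.inter hCc
    have hPV : P ⊆ V := fun u hu => hu.2.1
    have hPN : P ⊆ N := fun u hu => hP₀N hu.1
    obtain ⟨x, hxP, y, hyP, hxy⟩ := hnc P hPo ⟨v, hvP₀, hvC⟩ hPV
    have hr0 : 0 < dist (f x) (f y) := dist_pos.2 hxy
    obtain ⟨d₁, hd₁D, hd₁⟩ : ∃ d ∈ D, dist (f x) d < dist (f x) (f y) / 8 :=
      Metric.mem_closure_iff.1 (hDd (Set.mem_range_self x)) _ (by positivity)
    obtain ⟨d₂, hd₂D, hd₂⟩ : ∃ d ∈ D, dist (f y) d < dist (f x) (f y) / 8 :=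
      Metric.mem_closure_iff.1 (hDd (Set.mem_range_self y)) _ (by positivity)
    obtain ⟨q, hq1, hq2⟩ :=
      exists_rat_btwn (show dist (f x) (f y) / 8 < dist (f x) (f y) / 6 by linarith)
    have hxA : x ∈ A d₁ q := by
      simp only [hA, Set.mem_preimage, Metric.mem_closedBall]
      exact (hd₁.trans hq1).le
    have hyA : y ∈ A d₂ q := by
      simp only [hA, Set.mem_preimage, Metric.mem_closedBall]
      exact (hd₂.trans hq1).le
    have hdisj : Disjoint (A d₁ q) (A d₂ q) := by
      rw [Set.disjoint_left]
      intro z hz1 hz2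
      simp only [hA, Set.mem_preimage, Metric.mem_closedBall] at hz1 hz2
      have h4 : dist (f x) (f y) ≤ dist (f x) (f z) + dist (f z) (f y) := dist_triangle _ _ _
      have h5 : dist (f x) (f z) ≤ dist (f x) d₁ + dist d₁ (f z) := dist_triangle _ _ _
      have h6 : dist (f z) (f y) ≤ dist (f z) d₂ + dist d₂ (f y) := dist_triangle _ _ _
      rw [dist_comm d₁ (f z)] at h5
      rw [dist_comm d₂ (f y)] at h6
      linarith
    have aux : ∀ (e₁ e₂ : M) (x' y' : X), e₁ ∈ D → e₂ ∈ D → x' ∈ P → y' ∈ P → x' < y' →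
        x' ∈ A e₁ q → y' ∈ A e₂ q → Disjoint (A e₁ q) (A e₂ q) → (N ∩ S).Nonempty := by
      intro e₁ e₂ x' y' he₁ he₂ hx'P hy'P hlt hx'A hy'A hdsj
      have hIcc : Set.Icc x' y' ⊆ P := hPc.out hx'P hy'P
      obtain ⟨z, hzm⟩ := ((isClosed_Icc.inter (hAcl e₂ q)).isCompact).exists_isLeast
        ⟨y', ⟨⟨hlt.le, le_rfl⟩, hy'A⟩⟩
      obtain ⟨z', hz'm⟩ := ((isClosed_Icc.inter (hAcl e₁ q)).isCompact
        (s := Set.Icc x' z ∩ A e₁ q)).exists_isGreatest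
        ⟨x', ⟨⟨le_rfl, hzm.1.1.1⟩, hx'A⟩⟩
      have hz'z : z' < z :=
        lt_of_le_of_ne hz'm.1.1.2 (fun h => (hdsj.ne_of_mem hz'm.1.2 hzm.1.2) h)
      have hpair : (z', z) ∈ ZSet (A e₁ q) (A e₂ q) := by
        refine ⟨hz'z, hz'm.1.2, hzm.1.2, ?_, ?_⟩
        · rw [Set.eq_empty_iff_forall_notMem]
          rintro t ⟨⟨ht1, ht2⟩, htA⟩
          exact absurd (hz'm.2 ⟨⟨hz'm.1.1.1.trans ht1.le, ht2.le⟩, htA⟩) (not_le.2 ht1)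
        · rw [Set.eq_empty_iff_forall_notMem]
          rintro t ⟨⟨ht1, ht2⟩, htA⟩
          exact absurd (hzm.2 ⟨⟨hz'm.1.1.1.trans ht1.le, (ht2.trans_le hzm.1.1.2).le⟩, htA⟩)
            (not_le.2 ht2)
      have hzP : z ∈ P := hIcc hzm.1.1
      refine ⟨z, hPN hzP, hPV hzP, ?_⟩
      refine Set.mem_biUnion he₁ (Set.mem_biUnion he₂
        (Set.mem_iUnion.2 ⟨q, Set.mem_iUnion.2 ⟨q, ?_⟩⟩))
      simp only [hZ, dif_pos hdsj]
      exact Or.inr ⟨(z', z), hpair, rfl⟩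
    have hxyne : x ≠ y := fun h => hxy (by rw [h])
    rcases hxyne.lt_or_gt with h | h
    · exact aux d₁ d₂ x y hd₁D hd₂D hxP hyP h hxA hyA hdisj
    · exact aux d₂ d₁ y x hd₂D hd₁D hyP hxP h hyA hxA hdisj.symm
  refine ⟨⟨Subtype.val ⁻¹' S, hScnt.preimage Subtype.val_injective, ?_⟩⟩
  rw [dense_iff_inter_open]
  rintro U hU hUne
  obtain ⟨N, hN, rfl⟩ := isOpen_induced_iff.1 hU
  obtain ⟨⟨u, huV⟩, huN⟩ := hUne
  obtain ⟨s, hsN, hsS⟩ := key N hN ⟨u, huN, huV⟩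
  exact ⟨⟨s, hsS.1⟩, hsN, hsS⟩

end Aux

theorem stmt14 {X : Type*} [LinearOrder X] [TopologicalSpace X] [OrderTopology X]
    [CompactSpace X] :
    (∀ V : Set X, IsOpen V → V.Nonempty →
        ¬ TopologicalSpace.SeparableSpace ↥V ∨ ∃ x ∈ V, IsOpen ({x} : Set X)) ↔
      ∀ (M : Type*) [MetricSpace M], ∀ f : C(X, M), Dense (OmegaSet ⇑f) := by
  constructor
  · intro h M _ f
    rw [dense_iff_inter_open]
    intro U hU hUne
    rcases h U hU hUne with hns | ⟨x, hxU, hxo⟩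
    · by_contra hemp
      refine hns (aux_separable f hU ?_)
      intro U' hU'o hU'ne hU'sub
      by_contra hconst
      push_neg at hconst
      obtain ⟨u, hu⟩ := hU'ne
      exact hemp ⟨u, hU'sub hu,
        Set.mem_sUnion.2 ⟨U', ⟨hU'o, fun a ha b hb => hconst a ha b hb⟩, hu⟩⟩
    · refine ⟨x, hxU, Set.mem_sUnion.2 ⟨{x}, ⟨hxo, ?_⟩, rfl⟩⟩
      rintro a ha b hb
      rw [Set.mem_singleton_iff] at ha hb
      rw [ha, hb]
  · intro h V hVo hVne
    by_contra hcon
    push_neg at hcon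
    obtain ⟨hsep, hniso⟩ := hcon
    obtain ⟨s, hsc, hsd⟩ := @TopologicalSpace.exists_countable_dense ↥V _ hsep
    set D : Set X := Subtype.val '' s with hD
    have hDV : D ⊆ V := by rintro _ ⟨⟨u, hu⟩, -, rfl⟩; exact hu
    have hDc : D.Countable := hsc.image _
    have hDdense : ∀ N : Set X, IsOpen N → (N ∩ V).Nonempty → (N ∩ D).Nonempty := by
      rintro N hN ⟨u, huN, huV⟩
      obtain ⟨⟨w, hwV⟩, hwN, hws⟩ := (dense_iff_inter_open.1 hsd) (Subtype.val ⁻¹' N)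
        (hN.preimage continuous_subtype_val) ⟨⟨u, huV⟩, huN⟩
      exact ⟨w, hwN, Set.mem_image_of_mem _ hws⟩
    set Q : Set (X × X) := {p | p.1 ∈ D ∧ p.2 ∈ D ∧ p.1 ≠ p.2} with hQ
    have hQc : Q.Countable :=
      Set.Countable.mono (fun p hp => Set.mk_mem_prod hp.1 hp.2.1) (hDc.prod hDc)
    have hQne : Q.Nonempty := by
      obtain ⟨v, hvV⟩ := hVne
      obtain ⟨d, -, hdD⟩ := hDdense Set.univ isOpen_univ ⟨v, trivial, hvV⟩
      have hne2 : (({d}ᶜ : Set X) ∩ V).Nonempty := by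
        by_contra hemp2
        rw [Set.not_nonempty_iff_eq_empty] at hemp2
        have hVd : V = {d} := by
          apply Set.Subset.antisymm
          · intro u huV
            by_contra hud
            exact Set.eq_empty_iff_forall_notMem.1 hemp2 u ⟨hud, huV⟩
          · exact Set.singleton_subset_iff.2 (hDV hdD)
        exact hniso d (hDV hdD) (hVd ▸ hVo)
      obtain ⟨d', hd'c, hd'D⟩ := hDdense {d}ᶜ isOpen_compl_singleton hne2
      exact ⟨(d, d'), hdD, hd'D, Ne.symm (Set.mem_compl_singleton_iff.1 hd'c)⟩
    obtain ⟨e, hQe⟩ := hQc.exists_eq_range hQne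
    have hpairs : ∀ n : ℕ, ∃ g : C(X, ℝ), g (e n).1 = 0 ∧ g (e n).2 = 1 := by
      intro n
      have hmem : e n ∈ Q := hQe ▸ Set.mem_range_self n
      obtain ⟨g, hg0, hg1, -⟩ := exists_continuous_zero_one_of_isClosed
        (isClosed_singleton (x := (e n).1)) (isClosed_singleton (x := (e n).2))
        (Set.disjoint_singleton.2 hmem.2.2)
      exact ⟨g, by simpa using hg0 rfl, by simpa using hg1 rfl⟩
    choose g hg0 hg1 using hpairs
    haveI h1 : TopologicalSpace.MetrizableSpace (ℕ → ℝ) := UniformSpace.metrizableSpace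
    haveI h2 : TopologicalSpace.MetrizableSpace (ULift (ℕ → ℝ)) :=
      (Homeomorph.ulift (X := ℕ → ℝ)).isEmbedding.metrizableSpace
    letI : MetricSpace (ULift (ℕ → ℝ)) :=
      TopologicalSpace.metrizableSpaceMetric (ULift (ℕ → ℝ))
    have hFc : Continuous fun x : X => ULift.up (fun n => g n x : ℕ → ℝ) :=
      continuous_uliftUp.comp (continuous_pi fun n => (g n).continuous)
    have hd := h (ULift (ℕ → ℝ)) (ContinuousMap.mk _ hFc)
    obtain ⟨p, hpV, hpO⟩ := hd.inter_open_nonempty V hVo hVne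
    obtain ⟨U, ⟨hUo, hUconst⟩, hpU⟩ := hpO
    obtain ⟨d, hdU, hdD⟩ := hDdense U hUo ⟨p, hpU, hpV⟩
    have hdV := hDV hdD
    have hne2 : ((U ∩ {d}ᶜ) ∩ V).Nonempty := by
      by_contra hemp
      rw [Set.not_nonempty_iff_eq_empty] at hemp
      have hUV : U ∩ V = {d} := by
        apply Set.Subset.antisymm
        · rintro u ⟨huU, huV⟩
          by_contra hud
          exact Set.eq_empty_iff_forall_notMem.1 hemp u ⟨⟨huU, hud⟩, huV⟩
        · intro t ht
          rw [Set.mem_singleton_iff] at ht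
          exact ⟨ht ▸ hdU, ht ▸ hdV⟩
      exact hniso d hdV (hUV ▸ (hUo.inter hVo))
    obtain ⟨d', hd'mem, hd'D⟩ := hDdense (U ∩ {d}ᶜ) (hUo.inter isOpen_compl_singleton) hne2
    have hd'U : d' ∈ U := hd'mem.1
    have hdd' : d ≠ d' := Ne.symm (Set.mem_compl_singleton_iff.1 hd'mem.2)
    have hpQ : (d, d') ∈ Q := ⟨hdD, hd'D, hdd'⟩
    rw [hQe] at hpQ
    obtain ⟨n, hn⟩ := hpQ
    have hfd := hUconst d hdU d' hd'U
    have hval : g n d = g n d' := congrFun (congrArg ULift.down hfd) n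
    have h0 : g n d = 0 := by rw [← show (e n).1 = d from congrArg Prod.fst hn]; exact hg0 n
    have h1' : g n d' = 1 := by rw [← show (e n).2 = d' from congrArg Prod.snd hn]; exact hg1 n
    rw [h0, h1'] at hval
    norm_num at hval
end

section
/- Let X be a compact Hausdorff space with E_0(X,ℝ) = C(X,ℝ), and let M be a compact metric space belonging to the class 𝓕. Then E_0(X,M) = C(X,M). -/
/-- The class `𝓕`: the smallest class of (compact) metric spaces, closed under
homeomorphism, containing all spaces with at most one point, and containing `M` whenever
some continuous `φ : M → [0,1]` on a compact `M` has all of its fibers in `𝓕`. -/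
inductive MemF : ∀ (M : Type) [MetricSpace M], Prop where
  | subsingleton (M : Type) [MetricSpace M] (h : Subsingleton M) : MemF M
  | homeo (M N : Type) [MetricSpace M] [MetricSpace N] (e : M ≃ₜ N) (h : MemF M) : MemF N
  | fibers (M : Type) [MetricSpace M] [CompactSpace M] (φ : M → unitInterval)
      (hφ : Continuous φ) (h : ∀ r : unitInterval, MemF {x : M // φ x = r}) : MemF M

lemma omega_comp_inj {X M N : Type*} [TopologicalSpace X] {g : M → N}
    (hg : Function.Injective g) (f : X → M) : OmegaSet (g ∘ f) = OmegaSet f := by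
  have key : {U : Set X | IsOpen U ∧ ∀ x ∈ U, ∀ y ∈ U, (g ∘ f) x = (g ∘ f) y}
      = {U : Set X | IsOpen U ∧ ∀ x ∈ U, ∀ y ∈ U, f x = f y} := by
    ext U
    simp only [Set.mem_setOf_eq, Function.comp_apply]
    exact ⟨fun ⟨h1, h2⟩ => ⟨h1, fun a ha b hb => hg (h2 a ha b hb)⟩,
      fun ⟨h1, h2⟩ => ⟨h1, fun a ha b hb => congrArg g (h2 a ha b hb)⟩⟩
  unfold OmegaSet
  rw [key]

/-- The `E₀` property passes from `X` to the closure of an open subset `W`. -/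
lemma E0_closure {X : Type*} [TopologicalSpace X] [CompactSpace X] [T2Space X]
    (hX : ∀ f : C(X, ℝ), Dense (OmegaSet ⇑f)) (W : Set X) (hW : IsOpen W) :
    ∀ h : C((closure W : Set X), ℝ), Dense (OmegaSet ⇑h) := by
  intro h
  obtain ⟨H, hH⟩ := ContinuousMap.exists_restrict_eq (isClosed_closure (s := W)) h
  have hHh : ∀ a : (closure W : Set X), H a.val = h a := fun a =>
    ContinuousMap.congr_fun hH a
  rw [dense_iff_inter_open]
  intro O hO hOne
  obtain ⟨O'', hO'', hOeq⟩ := isOpen_induced_iff.mp hO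
  obtain ⟨z, hz⟩ := hOne
  have hzO'' : z.val ∈ O'' := by
    rw [← hOeq] at hz; exact hz
  obtain ⟨y, hyO, hyW⟩ := mem_closure_iff.mp z.2 O'' hO'' hzO''
  obtain ⟨y', ⟨hy'OW, hy'Ω⟩⟩ := dense_iff_inter_open.mp (hX H) (O'' ∩ W)
    (hO''.inter hW) ⟨y, hyO, hyW⟩
  obtain ⟨S, ⟨hSopen, hSconst⟩, hy'S⟩ := hy'Ω
  refine ⟨⟨y', subset_closure hy'OW.2⟩, ?_, ?_⟩
  · rw [← hOeq]; exact hy'OW.1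
  · refine ⟨Subtype.val ⁻¹' S, ⟨hSopen.preimage continuous_subtype_val, ?_⟩, hy'S⟩
    intro a ha b hb
    rw [← hHh a, ← hHh b]
    exact hSconst _ ha _ hb

lemma memF_aux (M : Type) [MetricSpace M] (hM : MemF M) :
    ∀ (X : Type*) [TopologicalSpace X] [CompactSpace X] [T2Space X],
      (∀ f : C(X, ℝ), Dense (OmegaSet ⇑f)) → ∀ f : C(X, M), Dense (OmegaSet ⇑f) := by
  induction hM with
  | subsingleton M h =>
    intro X _ _ _ hX f
    have : OmegaSet ⇑f = Set.univ := by
      apply Set.eq_univ_of_forall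
      intro x
      exact ⟨Set.univ, ⟨isOpen_univ, fun a _ b _ => h.elim (f a) (f b)⟩, trivial⟩
    rw [this]; exact dense_univ
  | homeo M N e h ih =>
    intro X _ _ _ hX f
    have := ih X hX ((e.symm : C(_, _)).comp f)
    rwa [show ⇑((e.symm : C(_, _)).comp f) = ⇑e.symm ∘ ⇑f from rfl,
      omega_comp_inj e.symm.injective] at this
  | fibers M φ hφ hfib ih =>
    intro X _ _ _ hX f
    -- `Ω_{φ ∘ f}` is dense
    have hg : Dense (OmegaSet (φ ∘ ⇑f)) := by
      have hc : Continuous fun x : X => ((φ (f x) : ℝ)) :=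
        continuous_subtype_val.comp (hφ.comp (map_continuous f))
      have := hX ⟨fun x => (φ (f x) : ℝ), hc⟩
      rwa [show ⇑(⟨fun x => (φ (f x) : ℝ), hc⟩ : C(X, ℝ)) =
        Subtype.val ∘ (φ ∘ ⇑f) from rfl, omega_comp_inj Subtype.val_injective] at this
    rw [dense_iff_inter_open]
    intro V hV hVne
    obtain ⟨x₀, hx₀V, hx₀Ω⟩ := dense_iff_inter_open.mp hg V hV hVne
    obtain ⟨U, ⟨hUopen, hUconst⟩, hx₀U⟩ := hx₀Ω
    have hU' : IsOpen (U ∩ V) := hUopen.inter hV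
    obtain ⟨t, ht_nhds, ht_closed, ht_sub⟩ :=
      exists_mem_nhds_isClosed_subset (hU'.mem_nhds ⟨hx₀U, hx₀V⟩)
    set W := interior t with hWdef
    have hWopen : IsOpen W := isOpen_interior
    have hx₀W : x₀ ∈ W := mem_interior_iff_mem_nhds.mpr ht_nhds
    set K := (closure W : Set X) with hKdef
    have hWsub : W ⊆ U ∩ V := fun x hx => ht_sub (interior_subset hx)
    have hKsub : K ⊆ U ∩ V := (closure_minimal interior_subset ht_closed).trans ht_sub
    haveI : CompactSpace K := isCompact_iff_compactSpace.mp isClosed_closure.isCompact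
    have hE0K : ∀ h : C(K, ℝ), Dense (OmegaSet ⇑h) := E0_closure hX W hWopen
    set r := φ (f x₀) with hrdef
    have hfiber : ∀ x : K, φ (f x.val) = r :=
      fun x => hUconst _ (hKsub x.2).1 _ hx₀U
    have hcont : Continuous fun x : K => (⟨f x.val, hfiber x⟩ : {m : M // φ m = r}) :=
      Continuous.subtype_mk ((map_continuous f).comp continuous_subtype_val) _
    let f' : C(K, {m : M // φ m = r}) := ⟨fun x => ⟨f x.val, hfiber x⟩, hcont⟩
    have hdf' := ih r K hE0K f'
    have hdr : Dense (OmegaSet (Subtype.val ∘ ⇑f')) := by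
      rw [omega_comp_inj Subtype.val_injective]; exact hdf'
    have hWkne : (Subtype.val ⁻¹' W : Set K).Nonempty :=
      ⟨⟨x₀, subset_closure hx₀W⟩, hx₀W⟩
    obtain ⟨z, hzW, hzΩ⟩ := dense_iff_inter_open.mp hdr (Subtype.val ⁻¹' W)
      (hWopen.preimage continuous_subtype_val) hWkne
    obtain ⟨S, ⟨hSopen, hSconst⟩, hzS⟩ := hzΩ
    obtain ⟨S'', hS'', hSeq⟩ := isOpen_induced_iff.mp hSopen
    refine ⟨z.val, (hWsub hzW).2, S'' ∩ W, ⟨hS''.inter hWopen, ?_⟩, ?_, hzW⟩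
    · intro a ha b hb
      have haK : a ∈ K := subset_closure ha.2
      have hbK : b ∈ K := subset_closure hb.2
      have haS : (⟨a, haK⟩ : K) ∈ S := by rw [← hSeq]; exact ha.1
      have hbS : (⟨b, hbK⟩ : K) ∈ S := by rw [← hSeq]; exact hb.1
      exact hSconst _ haS _ hbS
    · rw [← hSeq] at hzS; exact hzS

theorem stmt16 {X : Type*} [TopologicalSpace X] [CompactSpace X] [T2Space X]
    (hX : ∀ f : C(X, ℝ), Dense (OmegaSet ⇑f))
    (M : Type) [MetricSpace M] [CompactSpace M] (hM : MemF M) :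
    ∀ f : C(X, M), Dense (OmegaSet ⇑f) := by
  exact memF_aux M hM X hX
end
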